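/- arXiv:2506.17145 — 7 statements merged into one kernel-verified Lean document; each statement's English description precedes it below -/
import Mathlib

section
/- Let f be convex and L-smooth on a real inner product space, let δ ∈ (0,1), let h ∈ (0, 3/(2(1+δ))), and let x1 = x0 - (h/L)·d0 where d0 satisfies ‖d0 - ∇f(x0)‖ ≤ δ‖∇f(x0)‖. Then (1/L)·‖∇f(x1)‖² ≤ (1/(h(1-δ))) · (f(x0) - f(x1)). -/
section AuxOneStepInexactGD

open InnerProductSpace Set
open scoped RealInnerProductSpace

variable {H : Type*} [NormedAddCommGroup H] [InnerProductSpace ℝ H] [CompleteSpace H]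

lemma line_hasDerivAt (f : H → ℝ) (f' : H → H)
    (hgrad : ∀ x, HasGradientAt f (f' x) x) (x v : H) (t : ℝ) :
    HasDerivAt (fun s : ℝ => f (x + s • v)) ⟪f' (x + t • v), v⟫_ℝ t := by
  have h1 : HasDerivAt (fun s : ℝ => x + s • v) v t := by
    simpa using ((hasDerivAt_id t).smul_const v).const_add x
  have h2 := (hgrad (x + t • v)).hasFDerivAt.comp_hasDerivAt t h1
  exact h2.congr_deriv (by simp [toDual_apply_apply])

lemma conv_lb (f : H → ℝ) (f' : H → H)
    (hconv : ConvexOn ℝ Set.univ f)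
    (hgrad : ∀ x, HasGradientAt f (f' x) x) (x y : H) :
    f x + ⟪f' x, y - x⟫_ℝ ≤ f y := by
  set v := y - x with hv
  have hd : HasDerivAt (fun s : ℝ => f (x + s • v)) ⟪f' x, v⟫_ℝ 0 := by
    simpa using line_hasDerivAt f f' hgrad x v 0
  have hslope : ∀ t ∈ Ioo (0:ℝ) 1,
      slope (fun s : ℝ => f (x + s • v)) 0 t ≤ f y - f x := by
    intro t ht
    have hmem : x + t • v = (1 - t) • x + t • y := by
      rw [hv]; module
    have hle : f (x + t • v) ≤ (1 - t) * f x + t * f y := by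
      rw [hmem]
      exact hconv.2 (mem_univ x) (mem_univ y) (by linarith [ht.2]) ht.1.le (by ring)
    rw [slope_def_field]
    have h0 : x + (0:ℝ) • v = x := by simp
    rw [h0, sub_zero, div_le_iff₀ ht.1]
    nlinarith [ht.1, hle]
  have htend : Filter.Tendsto (slope (fun s : ℝ => f (x + s • v)) 0) (nhdsWithin 0 (Ioi 0)) (nhds ⟪f' x, v⟫_ℝ) :=
    (hasDerivAt_iff_tendsto_slope.mp hd).mono_left
      (nhdsWithin_mono 0 (fun t ht => Set.mem_compl_singleton_iff.mpr (ne_of_gt ht)))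
  have hle : ⟪f' x, v⟫_ℝ ≤ f y - f x := by
    refine le_of_tendsto htend ?_
    filter_upwards [Ioo_mem_nhdsGT_of_mem (by norm_num : (0:ℝ) ∈ Ico (0:ℝ) 1)] with t ht
    exact hslope t ht
  linarith

lemma descent_lemma (f : H → ℝ) (f' : H → H) (L : ℝ) (hL : 0 < L)
    (hgrad : ∀ x, HasGradientAt f (f' x) x)
    (hlip : LipschitzWith L.toNNReal f') (x y : H) :
    f y ≤ f x + ⟪f' x, y - x⟫_ℝ + L / 2 * ‖y - x‖ ^ 2 := by
  set v := y - x with hv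
  have hcont : Continuous fun t : ℝ => ⟪f' (x + t • v), v⟫_ℝ := by
    exact (Continuous.inner (hlip.continuous.comp (by continuity)) continuous_const)
  have hie : ∫ t in (0:ℝ)..1, ⟪f' (x + t • v), v⟫_ℝ = f y - f x := by
    have := intervalIntegral.integral_eq_sub_of_hasDerivAt
      (f := fun s : ℝ => f (x + s • v))
      (f' := fun t : ℝ => ⟪f' (x + t • v), v⟫_ℝ)
      (a := 0) (b := 1)
      (fun t _ => line_hasDerivAt f f' hgrad x v t)
      (hcont.intervalIntegrable 0 1)
    simpa [hv] using this
  have hbound : ∀ t ∈ Icc (0:ℝ) 1,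
      ⟪f' (x + t • v), v⟫_ℝ ≤ ⟪f' x, v⟫_ℝ + L * ‖v‖ ^ 2 * t := by
    intro t ht
    have h1 : ⟪f' (x + t • v), v⟫_ℝ - ⟪f' x, v⟫_ℝ = ⟪f' (x + t • v) - f' x, v⟫_ℝ := by
      rw [inner_sub_left]
    have h2 : ‖f' (x + t • v) - f' x‖ ≤ L * (t * ‖v‖) := by
      have := hlip.dist_le_mul (x + t • v) x
      rw [Real.coe_toNNReal L hL.le] at this
      calc ‖f' (x + t • v) - f' x‖ = dist (f' (x + t • v)) (f' x) := (dist_eq_norm _ _).symm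
        _ ≤ L * dist (x + t • v) x := this
        _ = L * (t * ‖v‖) := by
            rw [dist_eq_norm]
            simp [norm_smul, abs_of_nonneg ht.1]
    have h3 : ⟪f' (x + t • v) - f' x, v⟫_ℝ ≤ ‖f' (x + t • v) - f' x‖ * ‖v‖ :=
      real_inner_le_norm _ _
    nlinarith [norm_nonneg v, h3, h2, mul_le_mul_of_nonneg_right h2 (norm_nonneg v)]
  have hint : ∫ t in (0:ℝ)..1, ⟪f' (x + t • v), v⟫_ℝ ≤
      ∫ t in (0:ℝ)..1, (⟪f' x, v⟫_ℝ + L * ‖v‖ ^ 2 * t) := by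
    apply intervalIntegral.integral_mono_on (by norm_num)
      (hcont.intervalIntegrable 0 1)
      ((continuous_const.add (continuous_const.mul continuous_id)).intervalIntegrable 0 1)
    exact hbound
  have hval : ∫ t in (0:ℝ)..1, (⟪f' x, v⟫_ℝ + L * ‖v‖ ^ 2 * t) =
      ⟪f' x, v⟫_ℝ + L * ‖v‖ ^ 2 / 2 := by
    rw [intervalIntegral.integral_add (intervalIntegrable_const)
      (((by fun_prop : Continuous fun t : ℝ => L * ‖v‖ ^ 2 * t)).intervalIntegrable 0 1),
      intervalIntegral.integral_const_mul, integral_id]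
    simp
    ring
  have := hie ▸ (hval ▸ hint)
  linarith

lemma interp_ineq (f : H → ℝ) (f' : H → H) (L : ℝ) (hL : 0 < L)
    (hconv : ConvexOn ℝ Set.univ f)
    (hgrad : ∀ x, HasGradientAt f (f' x) x)
    (hlip : LipschitzWith L.toNNReal f') (x y : H) :
    f x + ⟪f' x, y - x⟫_ℝ + 1 / (2 * L) * ‖f' y - f' x‖ ^ 2 ≤ f y := by
  set φ : H → ℝ := fun z => f z - ⟪f' x, z⟫_ℝ with hφ
  set φ' : H → H := fun z => f' z - f' x with hφ'
  have hgradφ : ∀ z, HasGradientAt φ (φ' z) z := by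
    intro z
    have h1 : HasFDerivAt (fun z : H => (toDual ℝ H (f' x)) z) (toDual ℝ H (f' x)) z :=
      (toDual ℝ H (f' x)).hasFDerivAt
    have h2 := (hgrad z).hasFDerivAt.sub h1
    rw [HasGradientAt, HasGradientAtFilter]
    have h3 : toDual ℝ H (φ' z) = toDual ℝ H (f' z) - toDual ℝ H (f' x) := by
      rw [hφ']; simp [map_sub]
    rw [h3]
    exact h2
  have hconvφ : ConvexOn ℝ Set.univ φ := by
    refine ⟨convex_univ, fun a _ b _ s t hs ht hst => ?_⟩
    have := hconv.2 (mem_univ a) (mem_univ b) hs ht hst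
    simp only [smul_eq_mul] at this
    simp only [hφ, smul_eq_mul]
    rw [inner_add_right, real_inner_smul_right, real_inner_smul_right]
    linarith
  have hlipφ : LipschitzWith L.toNNReal φ' := by
    intro a b
    simpa [hφ', edist_eq_enorm_sub, sub_sub_sub_cancel_right] using hlip a b
  -- φ x ≤ φ z for all z
  have hmin : ∀ z, φ x ≤ φ z := by
    intro z
    have := conv_lb φ φ' hconvφ hgradφ x z
    simpa [hφ'] using this
  -- descent on φ at y towards z
  set w : H := f' y - f' x with hw
  set z : H := y - (L⁻¹) • w with hz
  have hdesc := descent_lemma φ φ' L hL hgradφ hlipφ y z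
  have hzy : z - y = -(L⁻¹ • w) := by rw [hz]; abel
  have hi : ⟪φ' y, z - y⟫_ℝ = -(L⁻¹ * ‖w‖ ^ 2) := by
    rw [hzy, hφ']
    simp only [inner_neg_right, real_inner_smul_right]
    rw [← hw, real_inner_self_eq_norm_sq]
  have hn : ‖z - y‖ ^ 2 = (L⁻¹) ^ 2 * ‖w‖ ^ 2 := by
    rw [hzy, norm_neg, norm_smul]
    simp [abs_of_nonneg (inv_nonneg.mpr hL.le), mul_pow]
  have key : φ x ≤ φ y - 1 / (2 * L) * ‖w‖ ^ 2 := by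
    have h1 := hmin z
    rw [hi, hn] at hdesc
    have hLne : L ≠ 0 := hL.ne'
    calc φ x ≤ φ z := h1
      _ ≤ φ y + -(L⁻¹ * ‖w‖ ^ 2) + L / 2 * ((L⁻¹) ^ 2 * ‖w‖ ^ 2) := hdesc
      _ = φ y - 1 / (2 * L) * ‖w‖ ^ 2 := by field_simp; ring
  have hxy : ⟪f' x, y - x⟫_ℝ = ⟪f' x, y⟫_ℝ - ⟪f' x, x⟫_ℝ := inner_sub_right _ _ _
  simp only [hφ] at key
  linarith

lemma scalar_key (a b r t E h δ : ℝ) (han : 0 ≤ a) (hbn : 0 ≤ b) (hrn : 0 ≤ r)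
    (hr2 : r ^ 2 = 4 * b ^ 2 - 4 * t + a ^ 2) (htri : 2 * b ≤ r + a)
    (hEb : -(δ * a * r) ≤ E) (hh0 : 0 < h) (hδ0 : 0 < δ) (hδ1 : δ < 1)
    (hkey : 2 * h * (1 + δ) < 3) :
    h * (1 - δ) * b ^ 2 ≤ h * (2 * t - a ^ 2 + E) + (3 / 2) * (a ^ 2 - 2 * t + b ^ 2) := by
  have hα : (0:ℝ) ≤ 3 - 2 * h * (1 + δ) := by linarith
  have hβ : (0:ℝ) ≤ 3 - 2 * h + 2 * h * δ := by nlinarith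
  have h4b : (0:ℝ) ≤ r + a + 2 * b := by linarith
  nlinarith [mul_nonneg hβ (sq_nonneg (a - r)),
    mul_nonneg hα (mul_nonneg (by linarith : (0:ℝ) ≤ r + a - 2 * b) h4b),
    mul_nonneg hh0.le (by linarith : (0:ℝ) ≤ E + δ * a * r), hr2]

theorem one_step_inexact_gd_left_regime'
    (f : H → ℝ) (f' : H → H) (L : ℝ) (hL : 0 < L)
    (hconv : ConvexOn ℝ Set.univ f)
    (hgrad : ∀ x, HasGradientAt f (f' x) x)
    (hlip : LipschitzWith L.toNNReal f')
    (δ : ℝ) (hδ : δ ∈ Set.Ioo (0 : ℝ) 1)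
    (h : ℝ) (hh : h ∈ Set.Ioo (0 : ℝ) (3 / (2 * (1 + δ))))
    (x0 d0 x1 : H)
    (hd0 : ‖d0 - f' x0‖ ≤ δ * ‖f' x0‖)
    (hx1 : x1 = x0 - (h / L) • d0) :
    (1 / L) * ‖f' x1‖ ^ 2 ≤ (1 / (h * (1 - δ))) * (f x0 - f x1) := by
  obtain ⟨hδ0, hδ1⟩ := hδ
  obtain ⟨hh0, hh1⟩ := hh
  have hδ1' : (0:ℝ) < 1 + δ := by linarith
  have hkey : 2 * h * (1 + δ) < 3 := by
    rw [lt_div_iff₀ (by positivity : (0:ℝ) < 2 * (1 + δ))] at hh1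
    nlinarith [hh1]
  set g0 : H := f' x0 with hg0
  set g1 : H := f' x1 with hg1
  set e : H := d0 - g0 with he
  have hd0e : d0 = g0 + e := by rw [he]; abel
  set a : ℝ := ‖g0‖ with ha
  set b : ℝ := ‖g1‖ with hb
  set r : ℝ := ‖(2:ℝ) • g1 - g0‖ with hr
  set t : ℝ := ⟪g0, g1⟫_ℝ with ht
  set E : ℝ := ⟪(2:ℝ) • g1 - g0, e⟫_ℝ with hE
  set p : ℝ := ⟪g1, e⟫_ℝ with hp
  set q : ℝ := ⟪g0, e⟫_ℝ with hq
  -- geometric facts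
  have hs : ‖g0 - g1‖ ^ 2 = a ^ 2 - 2 * t + b ^ 2 := by
    have h0 := @norm_sub_sq_real H _ _ g0 g1
    rw [← ha, ← hb, ← ht] at h0
    linarith [h0]
  have hs' : ‖g1 - g0‖ ^ 2 = a ^ 2 - 2 * t + b ^ 2 := by
    rw [norm_sub_rev]; exact hs
  have hr2 : r ^ 2 = 4 * b ^ 2 - 4 * t + a ^ 2 := by
    rw [hr, @norm_sub_sq_real, norm_smul, real_inner_smul_left]
    simp only [Real.norm_ofNat]
    rw [real_inner_comm, ← ht, ← ha, ← hb]
    ring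
  have htri : 2 * b ≤ r + a := by
    have h1 : ‖(2:ℝ) • g1‖ = ‖((2:ℝ) • g1 - g0) + g0‖ := by rw [sub_add_cancel]
    have h2 : ‖(2:ℝ) • g1‖ ≤ r + a := by rw [h1]; exact norm_add_le _ _
    rw [norm_smul] at h2
    simpa using h2
  have hrn : (0:ℝ) ≤ r := norm_nonneg _
  have hEb : -(δ * a * r) ≤ E := by
    have h1 : |E| ≤ r * ‖e‖ := by rw [hE, hr]; exact abs_real_inner_le_norm _ _
    have h3 : r * ‖e‖ ≤ r * (δ * a) := mul_le_mul_of_nonneg_left hd0 hrn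
    nlinarith [neg_abs_le E, h1, h3]
  -- interpolation both ways
  have hF1 := interp_ineq f f' L hL hconv hgrad hlip x1 x0
  have hF2 := interp_ineq f f' L hL hconv hgrad hlip x0 x1
  have hx01 : x0 - x1 = (h / L) • d0 := by rw [hx1]; abel
  have hx10 : x1 - x0 = -((h / L) • d0) := by rw [hx1]; abel
  have hi1 : ⟪g1, x0 - x1⟫_ℝ = (h / L) * (t + p) := by
    rw [hx01, real_inner_smul_right, hd0e, inner_add_right, real_inner_comm, ← ht, ← hp]
  have hi2 : ⟪g0, x1 - x0⟫_ℝ = -((h / L) * (a ^ 2 + q)) := by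
    rw [hx10, inner_neg_right, real_inner_smul_right, hd0e, inner_add_right,
      real_inner_self_eq_norm_sq, ← ha, ← hq]
  rw [hi1, hs] at hF1
  rw [hi2, hs'] at hF2
  set S : ℝ := a ^ 2 - 2 * t + b ^ 2 with hS
  -- multiply through by L
  have hF1' : h * (t + p) + S / 2 ≤ L * (f x0 - f x1) := by
    have h2 : (h / L) * (t + p) + 1 / (2 * L) * S ≤ f x0 - f x1 := by linarith
    have h3 := mul_le_mul_of_nonneg_left h2 hL.le
    calc h * (t + p) + S / 2 = L * ((h / L) * (t + p) + 1 / (2 * L) * S) := by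
          field_simp
      _ ≤ L * (f x0 - f x1) := h3
  have hF2' : -(h * (a ^ 2 + q)) + S / 2 ≤ L * (f x1 - f x0) := by
    have h2 : -((h / L) * (a ^ 2 + q)) + 1 / (2 * L) * S ≤ f x1 - f x0 := by linarith
    have h3 := mul_le_mul_of_nonneg_left h2 hL.le
    calc -(h * (a ^ 2 + q)) + S / 2 = L * (-((h / L) * (a ^ 2 + q)) + 1 / (2 * L) * S) := by
          field_simp
      _ ≤ L * (f x1 - f x0) := h3
  have hEsplit : E = 2 * p - q := by
    rw [hE, inner_sub_left, real_inner_smul_left, ← hp, ← hq]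
  have hLΔ : h * (2 * t - a ^ 2 + E) + (3 / 2) * S ≤ L * (f x0 - f x1) := by
    rw [hEsplit]
    linarith [hF1', hF2']
  have hscal := scalar_key a b r t E h δ (norm_nonneg _) (norm_nonneg _) hrn hr2 htri hEb hh0 hδ0 hδ1 hkey
  have hcomb : h * (1 - δ) * b ^ 2 ≤ L * (f x0 - f x1) := by
    rw [hS] at hLΔ; linarith
  have hpos : (0:ℝ) < h * (1 - δ) := mul_pos hh0 (by linarith)
  rw [div_mul_eq_mul_div, div_mul_eq_mul_div, div_le_div_iff₀ hL hpos]
  linarith [hcomb]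

end AuxOneStepInexactGD

/-- One step of relatively inexact gradient descent (inexactness `δ ∈ (0,1)`)
on a convex `L`-smooth function, left regime `h ∈ (0, 3/(2(1+δ)))`:
`(1/L)·‖∇f(x1)‖² ≤ (1/(h(1-δ))) · (f(x0) - f(x1))`. -/
theorem one_step_inexact_gd_left_regime
    {H : Type*} [NormedAddCommGroup H] [InnerProductSpace ℝ H] [CompleteSpace H]
    (f : H → ℝ) (f' : H → H) (L : ℝ) (hL : 0 < L)
    (hconv : ConvexOn ℝ Set.univ f)
    (hgrad : ∀ x, HasGradientAt f (f' x) x)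
    (hlip : LipschitzWith L.toNNReal f')
    (δ : ℝ) (hδ : δ ∈ Set.Ioo (0 : ℝ) 1)
    (h : ℝ) (hh : h ∈ Set.Ioo (0 : ℝ) (3 / (2 * (1 + δ))))
    (x0 d0 x1 : H)
    (hd0 : ‖d0 - f' x0‖ ≤ δ * ‖f' x0‖)
    (hx1 : x1 = x0 - (h / L) • d0) :
    (1 / L) * ‖f' x1‖ ^ 2 ≤ (1 / (h * (1 - δ))) * (f x0 - f x1) :=
  one_step_inexact_gd_left_regime' f f' L hL hconv hgrad hlip δ hδ h hh x0 d0 x1 hd0 hx1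
end

section
/- Let f be convex and L-smooth on a real inner product space, assume f attains a global minimum at x*, let δ ∈ (0,1), let h ∈ [0, 3/(2(1+δ))), and let x1 = x0 - (h/L)·d0 where d0 satisfies ‖d0 - ∇f(x0)‖ ≤ δ‖∇f(x0)‖. Then (1/L)·‖∇f(x1)‖² ≤ (1/(h(1-δ) + 1/2)) · (f(x0) - f(x*)). -/
open Set

local notation "⟪" x ", " y "⟫" => @inner ℝ _ _ x y
open Set

section Aux
variable {H : Type*} [NormedAddCommGroup H] [InnerProductSpace ℝ H] [CompleteSpace H]
variable (f : H → ℝ) (f' : H → H)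

lemma aux_line_hasDerivAt (hgrad : ∀ x, HasGradientAt f (f' x) x) (x v : H) (t : ℝ) :
    HasDerivAt (fun t : ℝ => f (x + t • v)) ⟪f' (x + t • v), v⟫ t := by
  have hline : HasDerivAt (fun t : ℝ => x + t • v) v t := by
    simpa using ((hasDerivAt_id t).smul_const v).const_add x
  have := (hgrad (x + t • v)).hasFDerivAt.comp_hasDerivAt t hline
  simp [InnerProductSpace.toDual_apply_apply] at this
  exact this

lemma aux_descent {L : ℝ} (hL : 0 < L)
    (hgrad : ∀ x, HasGradientAt f (f' x) x)
    (hlip : LipschitzWith L.toNNReal f') (x v : H) :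
    f (x + v) ≤ f x + ⟪f' x, v⟫ + L / 2 * ‖v‖ ^ 2 := by
  set F : ℝ → ℝ := fun t => f (x + t • v) - t * ⟪f' x, v⟫ - L / 2 * ‖v‖ ^ 2 * t ^ 2 with hF
  have hFd : ∀ t : ℝ, HasDerivAt F
      (⟪f' (x + t • v), v⟫ - ⟪f' x, v⟫ - L / 2 * ‖v‖ ^ 2 * (2 * t)) t := by
    intro t
    have h1 := aux_line_hasDerivAt f f' hgrad x v t
    have h2 : HasDerivAt (fun t : ℝ => t * ⟪f' x, v⟫) ⟪f' x, v⟫ t :=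
      hasDerivAt_mul_const _
    have h3 : HasDerivAt (fun t : ℝ => L / 2 * ‖v‖ ^ 2 * t ^ 2)
        (L / 2 * ‖v‖ ^ 2 * (2 * t)) t := by
      have h := (hasDerivAt_pow 2 t).const_mul (L / 2 * ‖v‖ ^ 2)
      exact h.congr_deriv (by norm_num)
    exact (h1.sub h2).sub h3
  have hanti : AntitoneOn F (Icc (0:ℝ) 1) := by
    apply antitoneOn_of_deriv_nonpos (convex_Icc 0 1)
    · exact fun t _ => (hFd t).continuousAt.continuousWithinAt
    · exact fun t _ => (hFd t).differentiableAt.differentiableWithinAt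
    · intro t ht
      rw [interior_Icc] at ht
      rw [(hFd t).deriv]
      have hinner : ⟪f' (x + t • v) - f' x, v⟫ ≤ ‖f' (x + t • v) - f' x‖ * ‖v‖ :=
        real_inner_le_norm _ _
      have hlipb : ‖f' (x + t • v) - f' x‖ ≤ L * (t * ‖v‖) := by
        have := hlip.dist_le_mul (x + t • v) x
        rw [dist_eq_norm, dist_eq_norm] at this
        have h2 : ‖x + t • v - x‖ = t * ‖v‖ := by
          rw [add_sub_cancel_left, norm_smul, Real.norm_eq_abs, abs_of_pos ht.1]
        rw [h2, Real.coe_toNNReal _ hL.le] at this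
        linarith [this]
      rw [inner_sub_left] at hinner
      nlinarith [norm_nonneg v, ht.1.le, ht.2.le, norm_nonneg (f' (x + t • v) - f' x)]
  have h01 : F 1 ≤ F 0 := hanti (left_mem_Icc.2 zero_le_one) (right_mem_Icc.2 zero_le_one) zero_le_one
  have hF0 : F 0 = f x := by simp [hF]
  have hF1 : F 1 = f (x + v) - ⟪f' x, v⟫ - L / 2 * ‖v‖ ^ 2 := by simp [hF]
  rw [hF0, hF1] at h01
  linarith

lemma aux_lower (hconv : ConvexOn ℝ Set.univ f)
    (hgrad : ∀ x, HasGradientAt f (f' x) x) (x y : H) :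
    f x + ⟪f' x, y - x⟫ ≤ f y := by
  set g : ℝ → ℝ := fun t => f (x + t • (y - x)) with hg
  have hgconv : ConvexOn ℝ Set.univ g := by
    have h1 := hconv.comp_affineMap (AffineMap.lineMap x y : ℝ →ᵃ[ℝ] H)
    have h2 : (f ∘ (AffineMap.lineMap x y : ℝ →ᵃ[ℝ] H)) = g := by
      funext t
      simp only [Function.comp_apply, hg]
      congr 1
      rw [AffineMap.lineMap_apply_module]
      module
    rw [h2] at h1
    simpa using h1
  have hder : HasDerivAt g ⟪f' x, y - x⟫ 0 := by
    have := aux_line_hasDerivAt f f' hgrad x (y - x) 0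
    simpa using this
  have hslope := hgconv.le_slope_of_hasDerivAt (mem_univ (0:ℝ)) (mem_univ (1:ℝ)) zero_lt_one hder
  rw [slope_def_field] at hslope
  have hg0 : g 0 = f x := by simp [hg]
  have hg1 : g 1 = f y := by simp [hg]
  simp [hg0, hg1] at hslope
  linarith

lemma aux_interp {L : ℝ} (hL : 0 < L)
    (hconv : ConvexOn ℝ Set.univ f)
    (hgrad : ∀ x, HasGradientAt f (f' x) x)
    (hlip : LipschitzWith L.toNNReal f') (x y : H) :
    f x + ⟪f' x, y - x⟫ + 1 / (2 * L) * ‖f' y - f' x‖ ^ 2 ≤ f y := by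
  set g : H := f' y - f' x with hgdef
  set w : H := (-(1 / L)) • g with hw
  have hA := aux_descent f f' hL hgrad hlip y w
  have hC := aux_lower f f' hconv hgrad x (y + w)
  have h1 : ⟪f' x, y + w - x⟫ = ⟪f' x, y - x⟫ + ⟪f' x, w⟫ := by
    have : y + w - x = (y - x) + w := by abel
    rw [this, inner_add_right]
  have h2 : ⟪f' y, w⟫ - ⟪f' x, w⟫ = -(1 / L) * ‖g‖ ^ 2 := by
    rw [← inner_sub_left, ← hgdef, hw, real_inner_smul_right, real_inner_self_eq_norm_sq]
  have h3 : ‖w‖ ^ 2 = (1 / L) ^ 2 * ‖g‖ ^ 2 := by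
    rw [hw, norm_smul, Real.norm_eq_abs, mul_pow, sq_abs]
    ring_nf
  have h4 : L / 2 * ((1 / L) ^ 2 * ‖g‖ ^ 2) - (1 / L) * ‖g‖ ^ 2 = -(1 / (2 * L) * ‖g‖ ^ 2) := by
    field_simp
    ring
  rw [h1] at hC
  rw [h3] at hA
  nlinarith [hA, hC, h2, h4]

end Aux



/-- One step of relatively inexact gradient descent (inexactness `δ ∈ (0,1)`)
on a convex `L`-smooth function with minimizer `xstar`, left regime `h ∈ [0, 3/(2(1+δ)))`:
`(1/L)·‖∇f(x1)‖² ≤ (1/(h(1-δ) + 1/2)) · (f(x0) - f(x*))`. -/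
theorem one_step_inexact_gd_left_regime_gap
    {H : Type*} [NormedAddCommGroup H] [InnerProductSpace ℝ H] [CompleteSpace H]
    (f : H → ℝ) (f' : H → H) (L : ℝ) (hL : 0 < L)
    (hconv : ConvexOn ℝ Set.univ f)
    (hgrad : ∀ x, HasGradientAt f (f' x) x)
    (hlip : LipschitzWith L.toNNReal f')
    (xstar : H) (hmin : ∀ y, f xstar ≤ f y)
    (δ : ℝ) (hδ : δ ∈ Set.Ioo (0 : ℝ) 1)
    (h : ℝ) (hh : h ∈ Set.Ico (0 : ℝ) (3 / (2 * (1 + δ))))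
    (x0 d0 x1 : H)
    (hd0 : ‖d0 - f' x0‖ ≤ δ * ‖f' x0‖)
    (hx1 : x1 = x0 - (h / L) • d0) :
    (1 / L) * ‖f' x1‖ ^ 2 ≤ (1 / (h * (1 - δ) + 1 / 2)) * (f x0 - f xstar) := by
  obtain ⟨hδ0, hδ1⟩ := hδ
  obtain ⟨hh0, hh1⟩ := hh
  have hLne : L ≠ 0 := hL.ne'
  set g0 : H := f' x0 with hg0
  set g1 : H := f' x1 with hg1
  set e : H := g1 - g0 with he
  set r : H := d0 - g0 with hr
  have hx01 : x0 - x1 = (h / L) • d0 := by rw [hx1]; abel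
  have hx10 : x1 - x0 = -((h / L) • d0) := by rw [hx1]; abel
  -- regime bound
  have hreg : h * (2 * (1 + δ)) < 3 := by
    have hpos : 0 < 2 * (1 + δ) := by linarith
    calc h * (2 * (1 + δ)) < 3 / (2 * (1 + δ)) * (2 * (1 + δ)) := by
          exact mul_lt_mul_of_pos_right hh1 hpos
      _ = 3 := by field_simp
  -- I1 : ‖g1‖²/2 ≤ (f x1 - f xstar) * L
  have I1 : ‖g1‖ ^ 2 / 2 ≤ (f x1 - f xstar) * L := by
    have hA := aux_descent f f' hL hgrad hlip x1 ((-(1 / L)) • g1)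
    have h2 : ⟪g1, (-(1 / L)) • g1⟫ = -(1 / L) * ‖g1‖ ^ 2 := by
      rw [real_inner_smul_right, real_inner_self_eq_norm_sq]
    have h3 : ‖(-(1 / L)) • g1‖ ^ 2 = (1 / L) ^ 2 * ‖g1‖ ^ 2 := by
      rw [norm_smul, Real.norm_eq_abs, mul_pow, sq_abs]; ring_nf
    have hmin' := hmin (x1 + (-(1 / L)) • g1)
    rw [h2, h3] at hA
    have hcalc : -(1 / L) * ‖g1‖ ^ 2 + L / 2 * ((1 / L) ^ 2 * ‖g1‖ ^ 2)
        = -(‖g1‖ ^ 2 / 2 / L) := by field_simp; ring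
    have hfin : f xstar ≤ f x1 - ‖g1‖ ^ 2 / 2 / L := by
      have := hmin'.trans hA
      linarith [hcalc, this]
    have := (div_le_iff₀ hL).mp (by linarith : ‖g1‖ ^ 2 / 2 / L ≤ f x1 - f xstar)
    linarith
  -- I2 : h*⟪g1,d0⟫ + ‖e‖²/2 ≤ (f x0 - f x1) * L
  have I2 : h * ⟪g1, d0⟫ + ‖e‖ ^ 2 / 2 ≤ (f x0 - f x1) * L := by
    have hB := aux_interp f f' hL hconv hgrad hlip x1 x0
    rw [hx01, real_inner_smul_right] at hB
    have hnorm : ‖f' x0 - f' x1‖ = ‖e‖ := by rw [he, hg0, hg1, norm_sub_rev]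
    rw [hnorm] at hB
    have hcalc : h / L * ⟪g1, d0⟫ + 1 / (2 * L) * ‖e‖ ^ 2
        = (h * ⟪g1, d0⟫ + ‖e‖ ^ 2 / 2) / L := by field_simp
    have : (h * ⟪g1, d0⟫ + ‖e‖ ^ 2 / 2) / L ≤ f x0 - f x1 := by
      rw [← hcalc]; rw [← hg1] at hB; linarith
    exact (div_le_iff₀ hL).mp this
  -- I3 : -(h*⟪g0,d0⟫) + ‖e‖²/2 ≤ (f x1 - f x0) * L
  have I3 : -(h * ⟪g0, d0⟫) + ‖e‖ ^ 2 / 2 ≤ (f x1 - f x0) * L := by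
    have hB := aux_interp f f' hL hconv hgrad hlip x0 x1
    rw [hx10, inner_neg_right, real_inner_smul_right] at hB
    have hnorm : ‖f' x1 - f' x0‖ = ‖e‖ := by rw [he, hg0, hg1]
    rw [hnorm] at hB
    have hcalc : -(h / L * ⟪g0, d0⟫) + 1 / (2 * L) * ‖e‖ ^ 2
        = (-(h * ⟪g0, d0⟫) + ‖e‖ ^ 2 / 2) / L := by field_simp
    have : (-(h * ⟪g0, d0⟫) + ‖e‖ ^ 2 / 2) / L ≤ f x1 - f x0 := by
      rw [← hcalc]; rw [← hg0] at hB; linarith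
    exact (div_le_iff₀ hL).mp this
  -- key algebraic inequality
  have hkey : h * (1 - δ) * ‖g1‖ ^ 2 ≤ 2 * (h * ⟪g1, d0⟫) - h * ⟪g0, d0⟫ + 3 / 2 * ‖e‖ ^ 2 := by
    set v : H := g0 + (2 : ℝ) • e with hv
    have hd0e : d0 = g0 + r := by rw [hr]; abel
    have hg1e : g1 = g0 + e := by rw [he]; abel
    have hvsq : ‖v‖ ^ 2 = ‖g0‖ ^ 2 + 4 * ⟪g0, e⟫ + 4 * ‖e‖ ^ 2 := by
      rw [hv, norm_add_sq_real, real_inner_smul_right, norm_smul]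
      simp [Real.norm_eq_abs]
      ring
    have hbsq : ‖g1‖ ^ 2 = ‖g0‖ ^ 2 + 2 * ⟪g0, e⟫ + ‖e‖ ^ 2 := by
      rw [hg1e, norm_add_sq_real]
    have hip1 : ⟪g1, d0⟫ = ‖g0‖ ^ 2 + ⟪g0, r⟫ + ⟪g0, e⟫ + ⟪e, r⟫ := by
      rw [hg1e, hd0e, inner_add_left, inner_add_right, inner_add_right,
        real_inner_self_eq_norm_sq, real_inner_comm e g0]
      ring
    have hip0 : ⟪g0, d0⟫ = ‖g0‖ ^ 2 + ⟪g0, r⟫ := by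
      rw [hd0e, inner_add_right, real_inner_self_eq_norm_sq]
    have hvr : ⟪v, r⟫ = ⟪g0, r⟫ + 2 * ⟪e, r⟫ := by
      rw [hv, inner_add_left, real_inner_smul_left]
    have hcs : -(‖v‖ * ‖r‖) ≤ ⟪v, r⟫ := by
      have := abs_real_inner_le_norm v r
      exact (abs_le.mp this).1
    -- h * ⟪v, r⟫ ≥ -(h*δ/2) * (‖g0‖^2 + ‖v‖^2)
    have s1 : ‖v‖ * ‖r‖ ≤ ‖v‖ * (δ * ‖g0‖) :=
      mul_le_mul_of_nonneg_left hd0 (norm_nonneg v)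
    have s2 : ‖v‖ * (δ * ‖g0‖) ≤ δ / 2 * (‖g0‖ ^ 2 + ‖v‖ ^ 2) := by
      nlinarith [sq_nonneg (‖v‖ - ‖g0‖), hδ0.le]
    have s3 : -(h * (δ / 2 * (‖g0‖ ^ 2 + ‖v‖ ^ 2))) ≤ h * ⟪v, r⟫ := by
      have t1 : -(δ / 2 * (‖g0‖ ^ 2 + ‖v‖ ^ 2)) ≤ ⟪v, r⟫ := by linarith
      have := mul_le_mul_of_nonneg_left t1 hh0
      linarith [this]
    have hprod : 0 ≤ (3 / 2 - h * (1 + δ)) * ‖e‖ ^ 2 :=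
      mul_nonneg (by linarith) (sq_nonneg _)
    have hEq : 2 * (h * ⟪g1, d0⟫) - h * ⟪g0, d0⟫ + 3 / 2 * ‖e‖ ^ 2 - h * (1 - δ) * ‖g1‖ ^ 2
        = h * δ * ‖g0‖ ^ 2 + 2 * (h * δ) * ⟪g0, e⟫ + h * ⟪v, r⟫
          + (3 / 2 - h * (1 - δ)) * ‖e‖ ^ 2 := by
      rw [hip1, hip0, hbsq, hvr]; ring
    have hSub : h * δ * ‖g0‖ ^ 2 + 2 * (h * δ) * ⟪g0, e⟫
          - h * (δ / 2 * (‖g0‖ ^ 2 + (‖g0‖ ^ 2 + 4 * ⟪g0, e⟫ + 4 * ‖e‖ ^ 2)))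
          + (3 / 2 - h * (1 - δ)) * ‖e‖ ^ 2
        = (3 / 2 - h * (1 + δ)) * ‖e‖ ^ 2 := by ring
    rw [hvsq] at s3
    linarith
  -- combine
  have hsum : (h * (1 - δ) + 1 / 2) * ‖g1‖ ^ 2 ≤ (f x0 - f xstar) * L := by
    have expand : (h * (1 - δ) + 1 / 2) * ‖g1‖ ^ 2
        = h * (1 - δ) * ‖g1‖ ^ 2 + ‖g1‖ ^ 2 / 2 := by ring
    linarith [I1, I2, I3, hkey]
  have hpos : 0 < h * (1 - δ) + 1 / 2 := by
    have := mul_nonneg hh0 (by linarith : (0:ℝ) ≤ 1 - δ)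
    linarith
  rw [one_div_mul_eq_div, one_div_mul_eq_div, div_le_div_iff₀ hL hpos]
  linarith [hsum]
end

section
/- Tightness of the right regime: let δ ∈ (0,1) and h ∈ [0, 2/(1+δ)]. Then there exist a convex 1-smooth function f : ℝ → ℝ attaining its global minimum at a point x*, a starting point x0 ∈ ℝ, and a direction d0 ∈ ℝ with |d0 - f'(x0)| ≤ δ|f'(x0)|, such that the point x1 = x0 - h·d0 satisfies |f'(x1)|² = 2(1 - h(1+δ))² · (f(x0) - f(x*)). (One may take f(x) = x²/2, x0 = √2, and d0 = (1+δ)·x0.) -/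
/-- Tightness of the right-regime rate: for `δ ∈ (0,1)` and
`h ∈ [0, 2/(1+δ)]` there exist a convex 1-smooth univariate function `f` attaining its
minimum at `xstar`, a starting point `x0` and a `δ`-relatively inexact direction `d0` such
that the iterate `x1 = x0 - h·d0` exactly attains the rate `2(1 - h(1+δ))²`. -/
theorem tightness_right_regime
    (δ h : ℝ) (hδ : δ ∈ Set.Ioo (0 : ℝ) 1)
    (hh : h ∈ Set.Icc (0 : ℝ) (2 / (1 + δ))) :
    ∃ (f : ℝ → ℝ) (xstar x0 d0 : ℝ),
      ConvexOn ℝ Set.univ f ∧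
      (∀ x, DifferentiableAt ℝ f x) ∧
      LipschitzWith 1 (deriv f) ∧
      (∀ y, f xstar ≤ f y) ∧
      |d0 - deriv f x0| ≤ δ * |deriv f x0| ∧
      |deriv f (x0 - h * d0)| ^ 2 = 2 * (1 - h * (1 + δ)) ^ 2 * (f x0 - f xstar) := by
  obtain ⟨hδ0, hδ1⟩ := hδ
  refine ⟨fun x => x ^ 2 / 2, 0, Real.sqrt 2, (1 + δ) * Real.sqrt 2, ?_, ?_, ?_, ?_, ?_, ?_⟩
  case _ =>
    have : ConvexOn ℝ Set.univ (fun x : ℝ => x ^ 2) :=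
      Even.convexOn_pow even_two
    simpa [div_eq_inv_mul, mul_comm] using this.smul (by norm_num : (0:ℝ) ≤ (2:ℝ)⁻¹)
  case _ => intro x; fun_prop
  case _ =>
    have hd : deriv (fun x : ℝ => x ^ 2 / 2) = fun x => x := by
      funext x
      have : HasDerivAt (fun x : ℝ => x ^ 2 / 2) x x := by
        simpa using (hasDerivAt_pow 2 x).div_const 2
      exact this.deriv
    rw [hd]
    exact LipschitzWith.id
  case _ => intro y; nlinarith [sq_nonneg y]
  case _ =>
    have hd : deriv (fun x : ℝ => x ^ 2 / 2) = fun x => x := by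
      funext x
      have : HasDerivAt (fun x : ℝ => x ^ 2 / 2) x x := by
        simpa using (hasDerivAt_pow 2 x).div_const 2
      exact this.deriv
    rw [hd]
    have h2 : (0:ℝ) ≤ Real.sqrt 2 := Real.sqrt_nonneg 2
    have : (1 + δ) * Real.sqrt 2 - Real.sqrt 2 = δ * Real.sqrt 2 := by ring
    rw [this, abs_of_nonneg (by positivity), abs_of_nonneg h2]
  case _ =>
    have hd : deriv (fun x : ℝ => x ^ 2 / 2) = fun x => x := by
      funext x
      have : HasDerivAt (fun x : ℝ => x ^ 2 / 2) x x := by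
        simpa using (hasDerivAt_pow 2 x).div_const 2
      exact this.deriv
    rw [hd]
    have hs : Real.sqrt 2 ^ 2 = 2 := Real.sq_sqrt (by norm_num)
    have : Real.sqrt 2 - h * ((1 + δ) * Real.sqrt 2) = (1 - h * (1 + δ)) * Real.sqrt 2 := by
      ring
    rw [this, sq_abs]
    ring
end

section
/- Let f be convex and L-smooth on a real inner product space, assume f attains a global minimum at x*, let δ ∈ (0,1), let h ∈ (0, 3/(2(1+δ))), let N ≥ 1, and define iterates x_{k+1} = x_k - (h/L)·d_k for k = 0, …, N-1, where each d_k satisfies ‖d_k - ∇f(x_k)‖ ≤ δ‖∇f(x_k)‖. Then (1/L) · min over k ∈ {1,…,N} of ‖∇f(x_k)‖² ≤ (1/(N·h(1-δ) + 1/2)) · (f(x0) - f(x*)). -/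
open RealInnerProductSpace



private lemma line_deriv {H : Type*} [NormedAddCommGroup H] [InnerProductSpace ℝ H] [CompleteSpace H]
    (f : H → ℝ) (f' : H → H) (hgrad : ∀ x, HasGradientAt f (f' x) x)
    (x v : H) (t₀ : ℝ) :
    HasDerivAt (fun t : ℝ => f (x + t • v)) ⟪f' (x + t₀ • v), v⟫ t₀ := by
  have hline : HasDerivAt (fun t : ℝ => x + t • v) v t₀ := by
    simpa using ((hasDerivAt_id t₀).smul_const v).const_add x
  simpa [Function.comp_def] using (hasGradientAt_iff_hasFDerivAt.mp (hgrad (x + t₀ • v))).comp_hasDerivAt t₀ hline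

/-- first-order condition for convexity -/
private lemma foc {H : Type*} [NormedAddCommGroup H] [InnerProductSpace ℝ H] [CompleteSpace H]
    (f : H → ℝ) (f' : H → H) (hconv : ConvexOn ℝ Set.univ f)
    (hgrad : ∀ x, HasGradientAt f (f' x) x) (u v : H) :
    f v + ⟪f' v, u - v⟫ ≤ f u := by
  set φ : ℝ → ℝ := fun t => f (v + t • (u - v)) with hφ
  have hφconv : ConvexOn ℝ Set.univ φ := by
    have h1 := hconv.comp_affineMap (AffineMap.lineMap v u : ℝ →ᵃ[ℝ] H)
    have h2 : (f ∘ ⇑(AffineMap.lineMap v u) : ℝ → ℝ) = φ := by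
      funext t
      simp only [hφ, Function.comp, AffineMap.lineMap_apply_module']
      rw [add_comm]
    have h3 : ((AffineMap.lineMap v u : ℝ →ᵃ[ℝ] H) ⁻¹' Set.univ) = Set.univ := by simp
    rw [h2, h3] at h1
    exact h1
  have hder : HasDerivAt φ ⟪f' v, u - v⟫ 0 := by
    simpa using line_deriv f f' hgrad v (u - v) 0
  have hs := hφconv.le_slope_of_hasDerivAt (Set.mem_univ (0:ℝ)) (Set.mem_univ (1:ℝ))
    one_pos hder
  have : slope φ 0 1 = φ 1 - φ 0 := by simp [slope_def_field]
  rw [this] at hs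
  have h0 : φ 0 = f v := by simp [hφ]
  have h1 : φ 1 = f u := by simp [hφ]
  rw [h0, h1] at hs
  linarith

/-- descent lemma -/
private lemma descent {H : Type*} [NormedAddCommGroup H] [InnerProductSpace ℝ H] [CompleteSpace H]
    (f : H → ℝ) (f' : H → H) (L : ℝ) (hL : 0 < L)
    (hgrad : ∀ x, HasGradientAt f (f' x) x)
    (hlip : LipschitzWith L.toNNReal f') (u v : H) :
    f u ≤ f v + ⟪f' v, u - v⟫ + L / 2 * ‖u - v‖ ^ 2 := by
  set w : H := u - v with hw
  set ψ : ℝ → ℝ := fun t => f (v + t • w) - t * ⟪f' v, w⟫ - (L / 2 * ‖w‖ ^ 2) * t ^ 2 with hψ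
  have hder : ∀ t : ℝ, HasDerivAt ψ
      (⟪f' (v + t • w), w⟫ - ⟪f' v, w⟫ - (L / 2 * ‖w‖ ^ 2) * (2 * t ^ 1)) t := by
    intro t
    exact ((line_deriv f f' hgrad v w t).sub (hasDerivAt_mul_const _)).sub
      ((hasDerivAt_pow 2 t).const_mul (L / 2 * ‖w‖ ^ 2))
  have hdiff : ∀ t : ℝ, DifferentiableAt ℝ ψ t := fun t => (hder t).differentiableAt
  have hnonpos : ∀ t ∈ interior (Set.Icc (0:ℝ) 1), deriv ψ t ≤ 0 := by
    intro t ht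
    rw [interior_Icc] at ht
    rw [(hder t).deriv]
    have hip : ⟪f' (v + t • w) - f' v, w⟫ ≤ ‖f' (v + t • w) - f' v‖ * ‖w‖ :=
      real_inner_le_norm _ _
    have hlb : ‖f' (v + t • w) - f' v‖ ≤ L * (t * ‖w‖) := by
      have := hlip.dist_le_mul (v + t • w) v
      rw [dist_eq_norm, dist_eq_norm] at this
      have h1 : v + t • w - v = t • w := by abel
      rw [h1, norm_smul] at this
      have h2 : (L.toNNReal : ℝ) = L := Real.coe_toNNReal L hL.le
      rw [h2] at this
      calc ‖f' (v + t • w) - f' v‖ ≤ L * (‖(t:ℝ)‖ * ‖w‖) := this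
        _ = L * (t * ‖w‖) := by rw [Real.norm_eq_abs, abs_of_pos ht.1]
    have hipe : ⟪f' (v + t • w), w⟫ - ⟪f' v, w⟫ = ⟪f' (v + t • w) - f' v, w⟫ := by
      rw [inner_sub_left]
    rw [sub_sub, ← sub_sub, hipe]
    have hwn : (0:ℝ) ≤ ‖w‖ := norm_nonneg _
    nlinarith [mul_le_mul_of_nonneg_right hlb hwn]
  have hanti : AntitoneOn ψ (Set.Icc (0:ℝ) 1) :=
    antitoneOn_of_deriv_nonpos (convex_Icc 0 1)
      (fun t _ => (hdiff t).continuousAt.continuousWithinAt)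
      (fun t _ => (hdiff t).differentiableWithinAt) hnonpos
  have h10 : ψ 1 ≤ ψ 0 := hanti (Set.mem_Icc.mpr ⟨le_refl 0, zero_le_one⟩)
    (Set.mem_Icc.mpr ⟨zero_le_one, le_refl 1⟩) zero_le_one
  have hψ0 : ψ 0 = f v := by simp [hψ]
  have hψ1 : ψ 1 = f u - ⟪f' v, w⟫ - L / 2 * ‖w‖ ^ 2 := by
    simp [hψ, hw]
  rw [hψ0, hψ1] at h10
  linarith

/-- interpolation inequality for convex L-smooth functions -/
private lemma interp {H : Type*} [NormedAddCommGroup H] [InnerProductSpace ℝ H] [CompleteSpace H]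
    (f : H → ℝ) (f' : H → H) (L : ℝ) (hL : 0 < L)
    (hconv : ConvexOn ℝ Set.univ f)
    (hgrad : ∀ x, HasGradientAt f (f' x) x)
    (hlip : LipschitzWith L.toNNReal f') (u v : H) :
    f v + ⟪f' v, u - v⟫ + 1 / (2 * L) * ‖f' u - f' v‖ ^ 2 ≤ f u := by
  set e : H := f' u - f' v with he
  set z : H := u - L⁻¹ • e with hz
  have h1 := foc f f' hconv hgrad z v
  have h2 := descent f f' L hL hgrad hlip z u
  have hz_u : z - u = -(L⁻¹ • e) := by rw [hz]; abel
  have i1 : ⟪f' u, z - u⟫ = -(L⁻¹ * ⟪f' u, e⟫) := by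
    rw [hz_u, inner_neg_right, real_inner_smul_right]
  have i2 : ‖z - u‖ ^ 2 = L⁻¹ ^ 2 * ‖e‖ ^ 2 := by
    rw [hz_u, norm_neg, norm_smul, mul_pow, Real.norm_eq_abs, sq_abs]
  have hz_v : z - v = (u - v) - L⁻¹ • e := by rw [hz]; abel
  have i3 : ⟪f' v, z - v⟫ = ⟪f' v, u - v⟫ - L⁻¹ * ⟪f' v, e⟫ := by
    rw [hz_v, inner_sub_right, real_inner_smul_right]
  have i4 : ⟪f' u, e⟫ - ⟪f' v, e⟫ = ‖e‖ ^ 2 := by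
    rw [← inner_sub_left, ← he, real_inner_self_eq_norm_sq]
  have e4 : L⁻¹ * ⟪f' u, e⟫ - L⁻¹ * ⟪f' v, e⟫ = L⁻¹ * ‖e‖ ^ 2 := by
    rw [← mul_sub, i4]
  have e5 : L / 2 * (L⁻¹ ^ 2 * ‖e‖ ^ 2) + 1 / (2 * L) * ‖e‖ ^ 2 = L⁻¹ * ‖e‖ ^ 2 := by
    field_simp
    ring
  rw [i1, i2] at h2
  rw [i3] at h1
  linarith

/-- bound at minimizer -/
private lemma min_gap {H : Type*} [NormedAddCommGroup H] [InnerProductSpace ℝ H] [CompleteSpace H]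
    (f : H → ℝ) (f' : H → H) (L : ℝ) (hL : 0 < L)
    (hgrad : ∀ x, HasGradientAt f (f' x) x)
    (hlip : LipschitzWith L.toNNReal f')
    (xstar : H) (hmin : ∀ y, f xstar ≤ f y) (u : H) :
    f xstar + 1 / (2 * L) * ‖f' u‖ ^ 2 ≤ f u := by
  set y : H := u - L⁻¹ • f' u with hy
  have h2 := descent f f' L hL hgrad hlip y u
  have hy_u : y - u = -(L⁻¹ • f' u) := by rw [hy]; abel
  have i1 : ⟪f' u, y - u⟫ = -(L⁻¹ * ‖f' u‖ ^ 2) := by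
    rw [hy_u, inner_neg_right, real_inner_smul_right, real_inner_self_eq_norm_sq]
  have i2 : ‖y - u‖ ^ 2 = L⁻¹ ^ 2 * ‖f' u‖ ^ 2 := by
    rw [hy_u, norm_neg, norm_smul, mul_pow, Real.norm_eq_abs, sq_abs]
  rw [i1, i2] at h2
  have h3 := hmin y
  have e5 : L / 2 * (L⁻¹ ^ 2 * ‖f' u‖ ^ 2) + 1 / (2 * L) * ‖f' u‖ ^ 2
      = L⁻¹ * ‖f' u‖ ^ 2 := by
    field_simp
    ring
  linarith

/-- key algebraic inequality (SOS certificate) -/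
private lemma key_alg {H : Type*} [NormedAddCommGroup H] [InnerProductSpace ℝ H]
    (δ h : ℝ) (hδ0 : 0 < δ) (hh0 : 0 < h) (hhu : 2 * h * (1 + δ) ≤ 3)
    (a b d : H) (hc : ‖d - a‖ ^ 2 ≤ δ ^ 2 * ‖a‖ ^ 2) :
    h * (1 - δ) * ‖b‖ ^ 2 ≤ 2 * h * ⟪b, d⟫ - h * ⟪a, d⟫ + 3 / 2 * ‖a - b‖ ^ 2 := by
  have key : 2 * δ * (2 * h * ⟪b, d⟫ - h * ⟪a, d⟫ + 3 / 2 * ‖a - b‖ ^ 2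
        - h * (1 - δ) * ‖b‖ ^ 2)
      = h * ‖d - (1 + δ) • a + (2 * δ) • b‖ ^ 2
        + δ * (3 - 2 * h * (1 + δ)) * ‖a - b‖ ^ 2
        + h * (δ ^ 2 * ‖a‖ ^ 2 - ‖d - a‖ ^ 2) := by
    simp only [← real_inner_self_eq_norm_sq, inner_sub_left, inner_sub_right,
      inner_add_left, inner_add_right, real_inner_smul_left, real_inner_smul_right,
      real_inner_comm a b, real_inner_comm a d, real_inner_comm b d]
    ring
  have t1 : 0 ≤ h * ‖d - (1 + δ) • a + (2 * δ) • b‖ ^ 2 := by positivity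
  have t2 : 0 ≤ δ * (3 - 2 * h * (1 + δ)) * ‖a - b‖ ^ 2 := by
    apply mul_nonneg (mul_nonneg hδ0.le (by linarith)) (by positivity)
  have t3 : 0 ≤ h * (δ ^ 2 * ‖a‖ ^ 2 - ‖d - a‖ ^ 2) :=
    mul_nonneg hh0.le (by linarith)
  nlinarith [key, t1, t2, t3]

/-- one step decrease -/
private lemma step_dec {H : Type*} [NormedAddCommGroup H] [InnerProductSpace ℝ H] [CompleteSpace H]
    (f : H → ℝ) (f' : H → H) (L : ℝ) (hL : 0 < L)
    (hconv : ConvexOn ℝ Set.univ f)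
    (hgrad : ∀ x, HasGradientAt f (f' x) x)
    (hlip : LipschitzWith L.toNNReal f')
    (δ h : ℝ) (hδ0 : 0 < δ) (hh0 : 0 < h) (hhu : 2 * h * (1 + δ) ≤ 3)
    (p q dd : H) (hdd : ‖dd - f' p‖ ≤ δ * ‖f' p‖) (hq : q = p - (h / L) • dd) :
    f q + h * (1 - δ) / L * ‖f' q‖ ^ 2 ≤ f p := by
  have hpq : p - q = (h / L) • dd := by rw [hq]; abel
  have hqp : q - p = -((h / L) • dd) := by rw [hq]; abel
  have hI2 := interp f f' L hL hconv hgrad hlip p q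
  have hI3 := interp f f' L hL hconv hgrad hlip q p
  rw [hpq, real_inner_smul_right] at hI2
  rw [hqp, inner_neg_right, real_inner_smul_right, norm_sub_rev (f' q) (f' p)] at hI3
  have hc : ‖dd - f' p‖ ^ 2 ≤ δ ^ 2 * ‖f' p‖ ^ 2 := by
    rw [← mul_pow]
    exact pow_le_pow_left₀ (norm_nonneg _) hdd 2
  have KB := key_alg δ h hδ0 hh0 hhu (f' p) (f' q) dd hc
  have hdiv : h * (1 - δ) * ‖f' q‖ ^ 2 / L
      ≤ (2 * h * ⟪f' q, dd⟫ - h * ⟪f' p, dd⟫ + 3 / 2 * ‖f' p - f' q‖ ^ 2) / L := by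
    apply div_le_div_of_nonneg_right KB hL.le
  have hdl : h * (1 - δ) / L * ‖f' q‖ ^ 2 = h * (1 - δ) * ‖f' q‖ ^ 2 / L := by ring
  rw [hdl]
  have expand : (2 * h * ⟪f' q, dd⟫ - h * ⟪f' p, dd⟫ + 3 / 2 * ‖f' p - f' q‖ ^ 2) / L
      = 2 * (h / L * ⟪f' q, dd⟫) - h / L * ⟪f' p, dd⟫
        + 3 * (1 / (2 * L) * ‖f' p - f' q‖ ^ 2) := by
    field_simp
  rw [expand] at hdiv
  linarith





/-- `N` steps of relatively inexact gradient descent (inexactness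
`δ ∈ (0,1)`) on a convex `L`-smooth function with minimizer `xstar`, left regime
`h ∈ (0, 3/(2(1+δ)))`:
`(1/L)·min_{k∈{1,…,N}} ‖∇f(x_k)‖² ≤ (1/(N·h(1-δ) + 1/2)) · (f(x0) - f(x*))`. -/
theorem N_steps_inexact_gd_left_regime
    {H : Type*} [NormedAddCommGroup H] [InnerProductSpace ℝ H] [CompleteSpace H]
    (f : H → ℝ) (f' : H → H) (L : ℝ) (hL : 0 < L)
    (hconv : ConvexOn ℝ Set.univ f)
    (hgrad : ∀ x, HasGradientAt f (f' x) x)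
    (hlip : LipschitzWith L.toNNReal f')
    (xstar : H) (hmin : ∀ y, f xstar ≤ f y)
    (δ : ℝ) (hδ : δ ∈ Set.Ioo (0 : ℝ) 1)
    (h : ℝ) (hh : h ∈ Set.Ioo (0 : ℝ) (3 / (2 * (1 + δ))))
    (N : ℕ) (hN : 1 ≤ N)
    (x : ℕ → H) (d : ℕ → H)
    (hd : ∀ k < N, ‖d k - f' (x k)‖ ≤ δ * ‖f' (x k)‖)
    (hstep : ∀ k < N, x (k + 1) = x k - (h / L) • d k) :
    (1 / L) * (Finset.Icc 1 N).inf' (Finset.nonempty_Icc.mpr hN)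
        (fun k => ‖f' (x k)‖ ^ 2) ≤
      (1 / ((N : ℝ) * h * (1 - δ) + 1 / 2)) * (f (x 0) - f xstar) := by
  obtain ⟨hδ0, hδ1⟩ := hδ
  obtain ⟨hh0, hh1⟩ := hh
  have h1δ : (0:ℝ) < 2 * (1 + δ) := by linarith
  have hhu : 2 * h * (1 + δ) ≤ 3 := by
    rw [lt_div_iff₀ h1δ] at hh1
    nlinarith
  set m : ℝ := (Finset.Icc 1 N).inf' (Finset.nonempty_Icc.mpr hN)
      (fun k => ‖f' (x k)‖ ^ 2) with hm
  have hcoef : 0 ≤ h * (1 - δ) / L :=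
    div_nonneg (mul_nonneg hh0.le (by linarith)) hL.le
  have main : ∀ j, j ≤ N → f (x j) + (j : ℝ) * (h * (1 - δ) / L) * m ≤ f (x 0) := by
    intro j
    induction j with
    | zero => intro _; simp
    | succ n ih =>
      intro hn1
      have hsd := step_dec f f' L hL hconv hgrad hlip δ h hδ0 hh0 hhu
        (x n) (x (n + 1)) (d n) (hd n (by omega)) (hstep n (by omega))
      have hmem : n + 1 ∈ Finset.Icc 1 N := by
        simp only [Finset.mem_Icc]; omega
      have hmle : m ≤ ‖f' (x (n + 1))‖ ^ 2 := Finset.inf'_le _ hmem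
      have hih := ih (by omega)
      have hmul := mul_le_mul_of_nonneg_left hmle hcoef
      push_cast
      nlinarith [hmul, hih, hsd]
  have hmain := main N le_rfl
  have hgap := min_gap f f' L hL hgrad hlip xstar hmin (x N)
  have hmemN : N ∈ Finset.Icc 1 N := by simp only [Finset.mem_Icc]; omega
  have hmleN : m ≤ ‖f' (x N)‖ ^ 2 := Finset.inf'_le _ hmemN
  have h2L : (0:ℝ) ≤ 1 / (2 * L) := by positivity
  have hmulN := mul_le_mul_of_nonneg_left hmleN h2L
  -- total: f xstar + N*(h(1-δ)/L)*m + 1/(2L)*m ≤ f x 0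
  have htot : (N : ℝ) * (h * (1 - δ) / L) * m + 1 / (2 * L) * m
      ≤ f (x 0) - f xstar := by linarith
  set C : ℝ := (N : ℝ) * h * (1 - δ) + 1 / 2 with hC
  have hNpos : (1:ℝ) ≤ (N : ℝ) := by exact_mod_cast hN
  have hCpos : 0 < C := by
    have : 0 < (N : ℝ) * h * (1 - δ) := by
      apply mul_pos (mul_pos (by linarith) hh0); linarith
    rw [hC]; linarith
  have h2 : C * m ≤ L * (f (x 0) - f xstar) := by
    have hx := mul_le_mul_of_nonneg_left htot hL.le
    calc C * m = L * ((N : ℝ) * (h * (1 - δ) / L) * m + 1 / (2 * L) * m) := by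
          rw [hC]; field_simp
      _ ≤ L * (f (x 0) - f xstar) := hx
  have final : m / L ≤ (f (x 0) - f xstar) / C := by
    rw [div_le_div_iff₀ hL hCpos]
    nlinarith [h2]
  calc (1 / L) * m = m / L := by ring
    _ ≤ (f (x 0) - f xstar) / C := final
    _ = (1 / C) * (f (x 0) - f xstar) := by ring
end

section
/- Let f be convex and L-smooth on a real inner product space, assume f attains a global minimum at x*, let δ ∈ (0,1), let h satisfy (3δ+2-√(4-3δ²))/(2δ(δ+1)) ≤ h < 2/(1+δ), let N ≥ 1, and define iterates x_{k+1} = x_k - (h/L)·d_k for k = 0, …, N-1, where each d_k satisfies ‖d_k - ∇f(x_k)‖ ≤ δ‖∇f(x_k)‖. Then (1/L) · min over k ∈ {1,…,N} of ‖∇f(x_k)‖² ≤ (2 / (N·(1 - h(1+δ))^{-2} - (N-1))) · (f(x0) - f(x*)). -/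
open RealInnerProductSpace Topology Filter

private lemma descent_aux
    {H : Type*} [NormedAddCommGroup H] [InnerProductSpace ℝ H] [CompleteSpace H]
    (f : H → ℝ) (f' : H → H) (L : ℝ) (hL : 0 < L)
    (hgrad : ∀ x, HasGradientAt f (f' x) x)
    (hlip : LipschitzWith L.toNNReal f') (x y : H) :
    f y ≤ f x + ⟪f' x, y - x⟫ + L / 2 * ‖y - x‖ ^ 2 := by
  set v := y - x with hv
  have hcurve : ∀ t : ℝ, HasDerivAt (fun t : ℝ => x + t • v) v t := by
    intro t
    simpa using ((hasDerivAt_id t).smul_const v).const_add x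
  have hφ : ∀ t : ℝ, HasDerivAt (fun t : ℝ => f (x + t • v)) ⟪f' (x + t • v), v⟫ t := by
    intro t
    have h1 := ((hgrad (x + t • v)).hasFDerivAt).comp_hasDerivAt t (hcurve t)
    exact h1
  set g : ℝ → ℝ := fun t =>
    f x + (t * ⟪f' x, v⟫ + t ^ 2 * (L / 2 * ‖v‖ ^ 2)) - f (x + t • v) with hgdef
  have hg' : ∀ t : ℝ, HasDerivAt g
      (⟪f' x, v⟫ + t * (L * ‖v‖ ^ 2) - ⟪f' (x + t • v), v⟫) t := by
    intro t
    have h1 : HasDerivAt (fun t : ℝ => t * ⟪f' x, v⟫) ⟪f' x, v⟫ t := by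
      simpa using (hasDerivAt_id t).mul_const ⟪f' x, v⟫
    have h2 : HasDerivAt (fun t : ℝ => t ^ 2 * (L / 2 * ‖v‖ ^ 2)) (t * (L * ‖v‖ ^ 2)) t := by
      have h3 := (hasDerivAt_pow 2 t).mul_const (L / 2 * ‖v‖ ^ 2)
      exact h3.congr_deriv (by ring)
    exact ((h1.add h2).const_add (f x)).sub (hφ t)
  have hfd : Differentiable ℝ f := fun z => (hgrad z).differentiableAt
  have hgc : Continuous g := by
    apply Continuous.sub
    · continuity
    · exact hfd.continuous.comp (by continuity)
  have hmono : MonotoneOn g (Set.Icc (0:ℝ) 1) := by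
    apply monotoneOn_of_deriv_nonneg (convex_Icc (0:ℝ) 1) hgc.continuousOn
    · intro t _
      exact ((hg' t).differentiableAt).differentiableWithinAt
    · intro t ht
      rw [interior_Icc] at ht
      rw [(hg' t).deriv]
      have h1 : ⟪f' (x + t • v) - f' x, v⟫ ≤ ‖f' (x + t • v) - f' x‖ * ‖v‖ :=
        real_inner_le_norm _ _
      have h2 : ‖f' (x + t • v) - f' x‖ ≤ L * (t * ‖v‖) := by
        have h3 := hlip.dist_le_mul (x + t • v) x
        rw [dist_eq_norm, dist_eq_norm] at h3
        have h4 : x + t • v - x = t • v := by abel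
        rw [h4] at h3
        have h5 : ‖t • v‖ = t * ‖v‖ := by
          rw [norm_smul, Real.norm_eq_abs, abs_of_pos ht.1]
        rw [h5] at h3
        calc ‖f' (x + t • v) - f' x‖ ≤ (L.toNNReal : ℝ) * (t * ‖v‖) := h3
          _ = L * (t * ‖v‖) := by rw [Real.coe_toNNReal L hL.le]
      have h6 : ⟪f' (x + t • v) - f' x, v⟫
          = ⟪f' (x + t • v), v⟫ - ⟪f' x, v⟫ := inner_sub_left _ _ _
      nlinarith [norm_nonneg v, ht.1.le]
  have hkey := hmono (Set.mem_Icc.mpr ⟨le_refl 0, zero_le_one⟩)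
    (Set.mem_Icc.mpr ⟨zero_le_one, le_refl 1⟩) zero_le_one
  have hg0 : g 0 = 0 := by simp [hgdef]
  have hg1 : g 1 = f x + (⟪f' x, v⟫ + L / 2 * ‖v‖ ^ 2) - f y := by
    simp only [hgdef, one_smul, one_pow, one_mul]
    rw [hv]
    congr 2
    abel
  rw [hg0, hg1] at hkey
  linarith

private lemma convex_grad_aux
    {H : Type*} [NormedAddCommGroup H] [InnerProductSpace ℝ H] [CompleteSpace H]
    (f : H → ℝ) (f' : H → H)
    (hconv : ConvexOn ℝ Set.univ f)
    (hgrad : ∀ x, HasGradientAt f (f' x) x) (x y : H) :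
    f x + ⟪f' x, y - x⟫ ≤ f y := by
  set v := y - x with hv
  have h0 : x + (0:ℝ) • v = x := by simp
  have hc : HasDerivAt (fun t : ℝ => x + t • v) v 0 := by
    simpa using ((hasDerivAt_id (0:ℝ)).smul_const v).const_add x
  have hφ : HasDerivAt (fun t : ℝ => f (x + t • v)) ⟪f' x, v⟫ 0 := by
    have h1 := (hgrad (x + (0:ℝ) • v)).hasFDerivAt.comp_hasDerivAt 0 hc
    rw [h0] at h1
    exact h1
  have hslope := hasDerivAt_iff_tendsto_slope.mp hφ
  have hsub : (𝓝[>] (0:ℝ)) ≤ (𝓝[≠] (0:ℝ)) :=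
    nhdsWithin_mono 0 (fun t ht => ne_of_gt ht)
  have hlim : Filter.Tendsto (slope (fun t : ℝ => f (x + t • v)) 0) (𝓝[>] 0)
      (𝓝 ⟪f' x, v⟫) := hslope.mono_left hsub
  have hub : ∀ᶠ t in 𝓝[>] (0:ℝ),
      slope (fun t : ℝ => f (x + t • v)) 0 t ≤ f y - f x := by
    filter_upwards [Ioc_mem_nhdsGT_of_mem (Set.mem_Ico.mpr ⟨le_refl 0, zero_lt_one⟩)]
      with t ht
    obtain ⟨ht0, ht1⟩ := ht
    have hpt : x + t • v = (1 - t) • x + t • y := by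
      rw [hv, smul_sub, sub_smul, one_smul]
      abel
    have hcx := hconv.2 (Set.mem_univ x) (Set.mem_univ y)
      (by linarith : (0:ℝ) ≤ 1 - t) ht0.le (by ring)
    simp only [smul_eq_mul] at hcx
    rw [slope_def_field]
    simp only [h0, sub_zero]
    rw [div_le_iff₀ ht0]
    calc f (x + t • v) - f x ≤ ((1 - t) * f x + t * f y) - f x := by
          rw [hpt]; linarith [hcx]
      _ = (f y - f x) * t := by ring
  have hfin := le_of_tendsto hlim hub
  linarith

private lemma interp_aux
    {H : Type*} [NormedAddCommGroup H] [InnerProductSpace ℝ H] [CompleteSpace H]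
    (f : H → ℝ) (f' : H → H) (L : ℝ) (hL : 0 < L)
    (hconv : ConvexOn ℝ Set.univ f)
    (hgrad : ∀ x, HasGradientAt f (f' x) x)
    (hlip : LipschitzWith L.toNNReal f') (x y : H) :
    f x + ⟪f' x, y - x⟫ + 1 / (2 * L) * ‖f' y - f' x‖ ^ 2 ≤ f y := by
  set w := f' y - f' x with hw
  set z := y - L⁻¹ • w with hz
  have hB := convex_grad_aux f f' hconv hgrad x z
  have hA := descent_aux f f' L hL hgrad hlip y z
  have h1 : z - y = -(L⁻¹ • w) := by rw [hz]; abel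
  have h2 : ⟪f' y, z - y⟫ = -(L⁻¹ * ⟪f' y, w⟫) := by
    rw [h1, inner_neg_right, real_inner_smul_right]
  have h3 : ‖z - y‖ ^ 2 = L⁻¹ ^ 2 * ‖w‖ ^ 2 := by
    rw [h1, norm_neg, norm_smul, Real.norm_eq_abs, abs_of_pos (by positivity), mul_pow]
  have h4 : z - x = (y - x) - L⁻¹ • w := by rw [hz]; abel
  have h5 : ⟪f' x, z - x⟫ = ⟪f' x, y - x⟫ - L⁻¹ * ⟪f' x, w⟫ := by
    rw [h4, inner_sub_right, real_inner_smul_right]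
  have h6 : ⟪f' y, w⟫ - ⟪f' x, w⟫ = ‖w‖ ^ 2 := by
    rw [← inner_sub_left, ← hw, real_inner_self_eq_norm_sq]
  rw [h5] at hB
  rw [h2, h3] at hA
  have h7 : L⁻¹ * ‖w‖ ^ 2 - L / 2 * (L⁻¹ ^ 2 * ‖w‖ ^ 2) = 1 / (2 * L) * ‖w‖ ^ 2 := by
    field_simp
    ring
  have h8 : L⁻¹ * ⟪f' y, w⟫ - L⁻¹ * ⟪f' x, w⟫ = L⁻¹ * ‖w‖ ^ 2 := by
    linear_combination L⁻¹ * h6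
  linarith [hA, hB, h7, h8]

private lemma key_scalar
    {H : Type*} [NormedAddCommGroup H] [InnerProductSpace ℝ H]
    (h δ σ : ℝ) (hδ0 : 0 < δ) (hσdef : σ = h * (1 + δ) - 1)
    (hσ0 : 0 < σ) (hh : 0 < h)
    (hc : 0 ≤ h * σ - (σ ^ 2 - σ + 1))
    (g g' e : H) (he : ⟪e, e⟫ ≤ δ ^ 2 * ⟪g, g⟫) :
    (1 / σ ^ 2 - 1) * ‖g'‖ ^ 2 ≤
      2 * h * (1 / σ) * ⟪g', g + e⟫ - 2 * h * ((1 - σ) / σ) * ⟪g, g + e⟫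
        + ((2 - σ) / σ) * ‖g - g'‖ ^ 2 := by
  have hv : (0:ℝ) ≤ ⟪e - (δ * (1 - σ)) • g + δ • g', e - (δ * (1 - σ)) • g + δ • g'⟫ :=
    real_inner_self_nonneg
  have hw : (0:ℝ) ≤ ⟪g' + σ • g, g' + σ • g⟫ := real_inner_self_nonneg
  have hvx : ⟪e - (δ * (1 - σ)) • g + δ • g', e - (δ * (1 - σ)) • g + δ • g'⟫
      = ⟪e, e⟫ + (δ * (1 - σ)) ^ 2 * ⟪g, g⟫ + δ ^ 2 * ⟪g', g'⟫
        - 2 * (δ * (1 - σ)) * ⟪g, e⟫ + 2 * δ * ⟪g', e⟫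
        - 2 * (δ * (1 - σ)) * δ * ⟪g, g'⟫ := by
    simp only [inner_sub_left, inner_sub_right, inner_add_left, inner_add_right,
      real_inner_smul_left, real_inner_smul_right, real_inner_comm e g,
      real_inner_comm e g', real_inner_comm g' g]
    ring
  have hwx : ⟪g' + σ • g, g' + σ • g⟫
      = ⟪g', g'⟫ + σ ^ 2 * ⟪g, g⟫ + 2 * σ * ⟪g, g'⟫ := by
    simp only [inner_add_left, inner_add_right, real_inner_smul_left,
      real_inner_smul_right, real_inner_comm g' g]
    ring
  rw [hvx] at hv
  rw [hwx] at hw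
  have hn1 : ‖g'‖ ^ 2 = ⟪g', g'⟫ := (real_inner_self_eq_norm_sq g').symm
  have hn2 : ‖g - g'‖ ^ 2 = ⟪g, g⟫ - 2 * ⟪g, g'⟫ + ⟪g', g'⟫ := by
    rw [← real_inner_self_eq_norm_sq]
    simp only [inner_sub_left, inner_sub_right, real_inner_comm g' g]
    ring
  have hi1 : ⟪g', g + e⟫ = ⟪g, g'⟫ + ⟪g', e⟫ := by
    rw [inner_add_right, real_inner_comm g' g]
  have hi2 : ⟪g, g + e⟫ = ⟪g, g⟫ + ⟪g, e⟫ := by rw [inner_add_right]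
  rw [hn1, hn2, hi1, hi2]
  set P1 := ⟪g, g⟫
  set P2 := ⟪g', g'⟫
  set P3 := ⟪e, e⟫
  set P4 := ⟪g, g'⟫
  set P5 := ⟪g, e⟫
  set P6 := ⟪g', e⟫
  have k1 : 0 ≤ (h / (σ * δ)) * (δ ^ 2 * P1 - P3) :=
    mul_nonneg (by positivity) (by linarith)
  have k2 : 0 ≤ (h / (σ * δ)) * (P3 + (δ * (1 - σ)) ^ 2 * P1 + δ ^ 2 * P2
      - 2 * (δ * (1 - σ)) * P5 + 2 * δ * P6 - 2 * (δ * (1 - σ)) * δ * P4) :=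
    mul_nonneg (by positivity) hv
  have k3 : 0 ≤ ((h * σ - (σ ^ 2 - σ + 1)) / σ ^ 2)
      * (P2 + σ ^ 2 * P1 + 2 * σ * P4) :=
    mul_nonneg (div_nonneg hc (by positivity)) hw
  have key : (2 * h * (1 / σ) * (P4 + P6) - 2 * h * ((1 - σ) / σ) * (P1 + P5)
        + ((2 - σ) / σ) * (P1 - 2 * P4 + P2)) - (1 / σ ^ 2 - 1) * P2
      = (h / (σ * δ)) * (δ ^ 2 * P1 - P3)
        + (h / (σ * δ)) * (P3 + (δ * (1 - σ)) ^ 2 * P1 + δ ^ 2 * P2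
          - 2 * (δ * (1 - σ)) * P5 + 2 * δ * P6 - 2 * (δ * (1 - σ)) * δ * P4)
        + ((h * σ - (σ ^ 2 - σ + 1)) / σ ^ 2) * (P2 + σ ^ 2 * P1 + 2 * σ * P4) := by
    subst hσdef
    field_simp
    ring
  linarith [k1, k2, k3, key]

set_option maxHeartbeats 1000000 in
/-- `N` steps of relatively inexact gradient descent (inexactness
`δ ∈ (0,1)`) on a convex `L`-smooth function with minimizer `xstar`, right regime
`(3δ+2-√(4-3δ²))/(2δ(δ+1)) ≤ h < 2/(1+δ)`:
`(1/L)·min_{k∈{1,…,N}} ‖∇f(x_k)‖² ≤ (2/(N(1-h(1+δ))⁻² - (N-1))) · (f(x0) - f(x*))`. -/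
theorem N_steps_inexact_gd_right_regime
    {H : Type*} [NormedAddCommGroup H] [InnerProductSpace ℝ H] [CompleteSpace H]
    (f : H → ℝ) (f' : H → H) (L : ℝ) (hL : 0 < L)
    (hconv : ConvexOn ℝ Set.univ f)
    (hgrad : ∀ x, HasGradientAt f (f' x) x)
    (hlip : LipschitzWith L.toNNReal f')
    (xstar : H) (hmin : ∀ y, f xstar ≤ f y)
    (δ : ℝ) (hδ : δ ∈ Set.Ioo (0 : ℝ) 1)
    (h : ℝ)
    (hlb : (3 * δ + 2 - Real.sqrt (4 - 3 * δ ^ 2)) / (2 * δ * (δ + 1)) ≤ h)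
    (hub : h < 2 / (1 + δ))
    (N : ℕ) (hN : 1 ≤ N)
    (x : ℕ → H) (d : ℕ → H)
    (hd : ∀ k < N, ‖d k - f' (x k)‖ ≤ δ * ‖f' (x k)‖)
    (hstep : ∀ k < N, x (k + 1) = x k - (h / L) • d k) :
    (1 / L) * (Finset.Icc 1 N).inf' (Finset.nonempty_Icc.mpr hN)
        (fun k => ‖f' (x k)‖ ^ 2) ≤
      (2 / ((N : ℝ) * ((1 - h * (1 + δ)) ^ 2)⁻¹ - ((N : ℝ) - 1))) *
        (f (x 0) - f xstar) := by
  obtain ⟨hδ0, hδ1⟩ := hδ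
  have hLne : L ≠ 0 := ne_of_gt hL
  have h1δ : (0:ℝ) < 1 + δ := by linarith
  have h4 : (0:ℝ) ≤ 4 - 3 * δ ^ 2 := by nlinarith
  have hsqle : Real.sqrt (4 - 3 * δ ^ 2) ≤ δ + 2 - 2 * δ ^ 2 := by
    have hb : (0:ℝ) ≤ δ + 2 - 2 * δ ^ 2 := by nlinarith
    have h2 : 4 - 3 * δ ^ 2 ≤ (δ + 2 - 2 * δ ^ 2) ^ 2 := by
      nlinarith [mul_nonneg (mul_nonneg hδ0.le (sq_nonneg (δ - 1))) h1δ.le]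
    calc Real.sqrt (4 - 3 * δ ^ 2) ≤ Real.sqrt ((δ + 2 - 2 * δ ^ 2) ^ 2) :=
          Real.sqrt_le_sqrt h2
      _ = δ + 2 - 2 * δ ^ 2 := Real.sqrt_sq hb
  have hDpos : (0:ℝ) < 2 * δ * (δ + 1) := by nlinarith
  have hlb' : 3 * δ + 2 - Real.sqrt (4 - 3 * δ ^ 2) ≤ h * (2 * δ * (δ + 1)) := by
    rw [div_le_iff₀ hDpos] at hlb
    linarith [hlb]
  have hh1 : 1 ≤ h := by nlinarith [hsqle, hlb']
  have hh0 : 0 < h := by linarith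
  have hh2 : h * (1 + δ) < 2 := by
    rw [lt_div_iff₀ h1δ] at hub
    linarith
  set σ : ℝ := h * (1 + δ) - 1 with hσdef
  have hσ0 : 0 < σ := by simp only [hσdef]; nlinarith
  have hσ1 : σ < 1 := by simp only [hσdef]; nlinarith
  have hσne : σ ≠ 0 := ne_of_gt hσ0
  have hsqrt0 : 0 ≤ Real.sqrt (4 - 3 * δ ^ 2) := Real.sqrt_nonneg _
  have hBnd : 2 * δ * (δ + 1) * h - (3 * δ + 2) ≤ Real.sqrt (4 - 3 * δ ^ 2) := by
    have h2d : (0:ℝ) < 2 * δ := by linarith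
    have h3 := mul_lt_mul_of_pos_left hh2 h2d
    nlinarith [hsqrt0]
  have hAnd : -(Real.sqrt (4 - 3 * δ ^ 2)) ≤ 2 * δ * (δ + 1) * h - (3 * δ + 2) := by
    linarith [hlb']
  have hsq : (2 * δ * (δ + 1) * h - (3 * δ + 2)) ^ 2 ≤ 4 - 3 * δ ^ 2 := by
    have h5 := sq_le_sq' hAnd hBnd
    rwa [Real.sq_sqrt h4] at h5
  have hcnn : 0 ≤ h * σ - (σ ^ 2 - σ + 1) := by
    simp only [hσdef]
    nlinarith [hsq, mul_pos hδ0 h1δ]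
  have hσ2 : (0:ℝ) < σ ^ 2 := by positivity
  have hq0 : 0 ≤ 1 / σ ^ 2 - 1 := by
    have h1 : σ ^ 2 ≤ 1 := by nlinarith
    have h2 : 1 ≤ 1 / σ ^ 2 := by
      rw [le_div_iff₀ hσ2]
      linarith
    linarith
  have id1 : ∀ a b c : ℝ, 2 * L * (a + h / L * b + 1 / (2 * L) * c)
      = 2 * L * a + 2 * h * b + c := by
    intro a b c; field_simp
  have id2 : ∀ a b c : ℝ, 2 * L * (a + -(h / L * b) + 1 / (2 * L) * c)
      = 2 * L * a + -(2 * h * b) + c := by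
    intro a b c; field_simp
  have id3 : ∀ P Q : ℝ, 1 / σ * (2 * L * (P - Q)) + (1 - σ) / σ * (2 * L * (Q - P))
      = 2 * L * (P - Q) := by
    intro P Q; field_simp; ring
  have id4 : ∀ b1 b2 c : ℝ, 1 / σ * (2 * h * b1 + c) + (1 - σ) / σ * (-(2 * h * b2) + c)
      = 2 * h * (1 / σ) * b1 - 2 * h * ((1 - σ) / σ) * b2 + ((2 - σ) / σ) * c := by
    intro b1 b2 c; field_simp; ring
  have id5 : ∀ s : ℝ, -(L⁻¹ * s) + L / 2 * (L⁻¹ ^ 2 * s) = -(1 / (2 * L)) * s := by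
    intro s; field_simp; ring
  have id6 : ∀ s : ℝ, 2 * L * (1 / (2 * L) * s) = s := by
    intro s; field_simp
  set m := (Finset.Icc 1 N).inf' (Finset.nonempty_Icc.mpr hN)
    (fun k => ‖f' (x k)‖ ^ 2) with hm
  have hmle : ∀ k, 1 ≤ k → k ≤ N → m ≤ ‖f' (x k)‖ ^ 2 := by
    intro k h1 h2
    exact Finset.inf'_le _ (Finset.mem_Icc.mpr ⟨h1, h2⟩)
  have hm0 : 0 ≤ m := by
    apply Finset.le_inf'
    intro b _
    positivity
  have hstepineq : ∀ k, k < N →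
      (1 / σ ^ 2 - 1) * m ≤ 2 * L * (f (x k) - f (x (k + 1))) := by
    intro k hk
    have he : ⟪d k - f' (x k), d k - f' (x k)⟫ ≤ δ ^ 2 * ⟪f' (x k), f' (x k)⟫ := by
      have h1 := hd k hk
      have h2 : ‖d k - f' (x k)‖ ^ 2 ≤ (δ * ‖f' (x k)‖) ^ 2 :=
        pow_le_pow_left₀ (norm_nonneg _) h1 2
      calc ⟪d k - f' (x k), d k - f' (x k)⟫ = ‖d k - f' (x k)‖ ^ 2 :=
            real_inner_self_eq_norm_sq _
        _ ≤ (δ * ‖f' (x k)‖) ^ 2 := h2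
        _ = δ ^ 2 * ‖f' (x k)‖ ^ 2 := by ring
        _ = δ ^ 2 * ⟪f' (x k), f' (x k)⟫ := by rw [real_inner_self_eq_norm_sq]
    have hkey := key_scalar h δ σ hδ0 hσdef hσ0 hh0 hcnn
      (f' (x k)) (f' (x (k + 1))) (d k - f' (x k)) he
    have hgd : f' (x k) + (d k - f' (x k)) = d k := by abel
    rw [hgd] at hkey
    have hxk : x (k + 1) = x k - (h / L) • d k := hstep k hk
    have hd1 : x k - x (k + 1) = (h / L) • d k := by rw [hxk]; abel
    have hd2 : x (k + 1) - x k = -((h / L) • d k) := by rw [hxk]; abel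
    have hA := interp_aux f f' L hL hconv hgrad hlip (x (k + 1)) (x k)
    have hB := interp_aux f f' L hL hconv hgrad hlip (x k) (x (k + 1))
    rw [hd1, real_inner_smul_right] at hA
    rw [hd2, inner_neg_right, real_inner_smul_right,
      show ‖f' (x (k + 1)) - f' (x k)‖ = ‖f' (x k) - f' (x (k + 1))‖ from
        norm_sub_rev _ _] at hB
    have hAm : 2 * h * ⟪f' (x (k + 1)), d k⟫ + ‖f' (x k) - f' (x (k + 1))‖ ^ 2
        ≤ 2 * L * (f (x k) - f (x (k + 1))) := by
      have h5 := mul_le_mul_of_nonneg_left hA (by positivity : (0:ℝ) ≤ 2 * L)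
      have e1 : 2 * L * (f (x (k + 1)) + h / L * ⟪f' (x (k + 1)), d k⟫
            + 1 / (2 * L) * ‖f' (x k) - f' (x (k + 1))‖ ^ 2)
          = 2 * L * f (x (k + 1)) + 2 * h * ⟪f' (x (k + 1)), d k⟫
            + ‖f' (x k) - f' (x (k + 1))‖ ^ 2 := id1 _ _ _
      rw [e1] at h5
      linarith
    have hBm : -(2 * h * ⟪f' (x k), d k⟫) + ‖f' (x k) - f' (x (k + 1))‖ ^ 2
        ≤ 2 * L * (f (x (k + 1)) - f (x k)) := by
      have h5 := mul_le_mul_of_nonneg_left hB (by positivity : (0:ℝ) ≤ 2 * L)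
      have e1 : 2 * L * (f (x k) + -(h / L * ⟪f' (x k), d k⟫)
            + 1 / (2 * L) * ‖f' (x k) - f' (x (k + 1))‖ ^ 2)
          = 2 * L * f (x k) + -(2 * h * ⟪f' (x k), d k⟫)
            + ‖f' (x k) - f' (x (k + 1))‖ ^ 2 := id2 _ _ _
      rw [e1] at h5
      linarith
    have hβ : (0:ℝ) ≤ (1 - σ) / σ := div_nonneg (by linarith) hσ0.le
    have hsum : 2 * h * (1 / σ) * ⟪f' (x (k + 1)), d k⟫
          - 2 * h * ((1 - σ) / σ) * ⟪f' (x k), d k⟫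
          + ((2 - σ) / σ) * ‖f' (x k) - f' (x (k + 1))‖ ^ 2
        ≤ 2 * L * (f (x k) - f (x (k + 1))) := by
      have c1 := mul_le_mul_of_nonneg_left hAm
        (le_of_lt (by positivity : (0:ℝ) < 1 / σ))
      have c2 := mul_le_mul_of_nonneg_left hBm hβ
      have e2 : 1 / σ * (2 * L * (f (x k) - f (x (k + 1))))
            + (1 - σ) / σ * (2 * L * (f (x (k + 1)) - f (x k)))
          = 2 * L * (f (x k) - f (x (k + 1))) := id3 _ _
      have e3 : 1 / σ * (2 * h * ⟪f' (x (k + 1)), d k⟫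
              + ‖f' (x k) - f' (x (k + 1))‖ ^ 2)
            + (1 - σ) / σ * (-(2 * h * ⟪f' (x k), d k⟫)
              + ‖f' (x k) - f' (x (k + 1))‖ ^ 2)
          = 2 * h * (1 / σ) * ⟪f' (x (k + 1)), d k⟫
            - 2 * h * ((1 - σ) / σ) * ⟪f' (x k), d k⟫
            + ((2 - σ) / σ) * ‖f' (x k) - f' (x (k + 1))‖ ^ 2 := id4 _ _ _
      linarith [c1, c2, e2, e3]
    have hmle' : m ≤ ‖f' (x (k + 1))‖ ^ 2 :=
      hmle (k + 1) (Nat.le_add_left 1 k) (Nat.succ_le_of_lt hk)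
    have h6 : (1 / σ ^ 2 - 1) * m ≤ (1 / σ ^ 2 - 1) * ‖f' (x (k + 1))‖ ^ 2 :=
      mul_le_mul_of_nonneg_left hmle' hq0
    linarith [hkey, hsum, h6]
  have htel : ∀ n : ℕ, n ≤ N →
      (n : ℝ) * ((1 / σ ^ 2 - 1) * m) ≤ 2 * L * (f (x 0) - f (x n)) := by
    intro n
    induction n with
    | zero => intro _; simp
    | succ k ih =>
      intro hkN
      have h1 := ih (Nat.le_of_succ_le hkN)
      have h2 := hstepineq k (Nat.lt_of_succ_le hkN)
      push_cast
      linarith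
  have hfin : m ≤ 2 * L * (f (x N) - f xstar) := by
    have h1 := descent_aux f f' L hL hgrad hlip (x N) (x N - L⁻¹ • f' (x N))
    have h2 : x N - L⁻¹ • f' (x N) - x N = -(L⁻¹ • f' (x N)) := by abel
    rw [h2, inner_neg_right, real_inner_smul_right, real_inner_self_eq_norm_sq] at h1
    have h3 : ‖-(L⁻¹ • f' (x N))‖ ^ 2 = L⁻¹ ^ 2 * ‖f' (x N)‖ ^ 2 := by
      rw [norm_neg, norm_smul, Real.norm_eq_abs, abs_of_pos (by positivity), mul_pow]
    rw [h3] at h1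
    have h4 := hmin (x N - L⁻¹ • f' (x N))
    have h5 := hmle N hN (le_refl N)
    have e1 : -(L⁻¹ * ‖f' (x N)‖ ^ 2) + L / 2 * (L⁻¹ ^ 2 * ‖f' (x N)‖ ^ 2)
        = -(1 / (2 * L)) * ‖f' (x N)‖ ^ 2 := id5 _
    have h6 : 1 / (2 * L) * ‖f' (x N)‖ ^ 2 ≤ f (x N) - f xstar := by
      linarith [h1, h4, e1]
    have h7 := mul_le_mul_of_nonneg_left h6 (by positivity : (0:ℝ) ≤ 2 * L)
    have e2 : 2 * L * (1 / (2 * L) * ‖f' (x N)‖ ^ 2) = ‖f' (x N)‖ ^ 2 := id6 _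
    linarith [h7, e2, h5]
  have htotal : ((N : ℝ) * (1 / σ ^ 2 - 1) + 1) * m ≤ 2 * L * (f (x 0) - f xstar) := by
    have h1 := htel N (le_refl N)
    have e1 : ((N : ℝ) * (1 / σ ^ 2 - 1) + 1) * m
        = (N : ℝ) * ((1 / σ ^ 2 - 1) * m) + m := by ring
    rw [e1]
    linarith [h1, hfin]
  have hD : (N : ℝ) * ((1 - h * (1 + δ)) ^ 2)⁻¹ - ((N : ℝ) - 1)
      = (N : ℝ) * (1 / σ ^ 2 - 1) + 1 := by
    have hs : (1 - h * (1 + δ)) ^ 2 = σ ^ 2 := by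
      simp only [hσdef]
      ring
    rw [hs]
    field_simp
    ring
  have hDpos2 : 0 < (N : ℝ) * (1 / σ ^ 2 - 1) + 1 := by
    have h1 : 0 ≤ (N : ℝ) * (1 / σ ^ 2 - 1) := mul_nonneg (Nat.cast_nonneg N) hq0
    linarith
  rw [hD]
  have e4 : (1 / L) * m = m / L := by ring
  rw [e4]
  have e5 : 2 / ((N : ℝ) * (1 / σ ^ 2 - 1) + 1) * (f (x 0) - f xstar)
      = (2 * (f (x 0) - f xstar)) / ((N : ℝ) * (1 / σ ^ 2 - 1) + 1) := by ring
  rw [e5, div_le_div_iff₀ hL hDpos2]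
  nlinarith [htotal]
end

section
/- Lower bound via a quadratic function: for every N ≥ 1, δ ∈ (0,1), and h ∈ [0, 2/(1+δ)], the function f(x) = x²/2 on ℝ (convex, 1-smooth, minimized at x* = 0), starting point x0 = √2, and directions d_k = (1+δ)·f'(x_k) (which satisfy |d_k - f'(x_k)| ≤ δ|f'(x_k)|) produce iterates x_{k+1} = x_k - h·d_k satisfying |f'(x_N)|² = 2·(1 - h(1+δ))^{2N} · (f(x0) - f(x*)). -/
/-- Lower bound via the quadratic function `f(x) = x²/2` (convex, 1-smooth,
minimized at `0`): starting from `x0 = √2` with directions `d_k = (1+δ)·f'(x_k)`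
(which are `δ`-relatively inexact), the iterates `x_{k+1} = x_k - h·d_k` satisfy
`|f'(x_N)|² = 2(1 - h(1+δ))^{2N} · (f(x0) - f(0))` for every `N ≥ 1`. -/
theorem lower_bound_quadratic
    (δ h : ℝ) (hδ : δ ∈ Set.Ioo (0 : ℝ) 1)
    (hh : h ∈ Set.Icc (0 : ℝ) (2 / (1 + δ)))
    (f : ℝ → ℝ) (hf : f = fun x => x ^ 2 / 2)
    (x d : ℕ → ℝ)
    (hx0 : x 0 = Real.sqrt 2)
    (hd : ∀ k, d k = (1 + δ) * deriv f (x k))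
    (hstep : ∀ k, x (k + 1) = x k - h * d k) :
    ConvexOn ℝ Set.univ f ∧
    LipschitzWith 1 (deriv f) ∧
    (∀ y, f 0 ≤ f y) ∧
    (∀ k, |d k - deriv f (x k)| ≤ δ * |deriv f (x k)|) ∧
    (∀ N : ℕ, 1 ≤ N →
      |deriv f (x N)| ^ 2 = 2 * (1 - h * (1 + δ)) ^ (2 * N) * (f (x 0) - f 0)) := by
  have hderiv : deriv f = fun y : ℝ => y := by
    subst hf
    funext y
    have : HasDerivAt (fun x : ℝ => x ^ 2 / 2) (y) y := by
      have := (hasDerivAt_pow 2 y).div_const 2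
      simpa [pow_one] using this
    exact this.deriv
  refine ⟨?_, ?_, ?_, ?_, ?_⟩
  · subst hf
    have : ConvexOn ℝ Set.univ (fun x : ℝ => x ^ 2) := by
      simpa using (Even.convexOn_pow (even_two) : ConvexOn ℝ Set.univ fun x : ℝ => x ^ 2)
    simpa [div_eq_inv_mul] using this.smul (by norm_num : (0:ℝ) ≤ (2:ℝ)⁻¹)
  · rw [hderiv]
    exact LipschitzWith.id
  · intro y; subst hf; simp; positivity
  · intro k
    rw [hd k]
    have : (1 + δ) * deriv f (x k) - deriv f (x k) = δ * deriv f (x k) := by ring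
    rw [this, abs_mul, abs_of_nonneg hδ.1.le]
  · intro N _
    have hrec : ∀ k, x k = (1 - h * (1 + δ)) ^ k * Real.sqrt 2 := by
      intro k
      induction k with
      | zero => simpa using hx0
      | succ n ih =>
        rw [hstep n, hd n, hderiv, ih]
        ring
    rw [hderiv, hrec N, hf, hx0]
    simp only
    have h2 : Real.sqrt 2 ^ 2 = 2 := Real.sq_sqrt (by norm_num)
    rw [sq_abs, mul_pow, h2, mul_comm 2 N, pow_mul]
    ring
end

section
/- Divergence above the maximal stepsize: let δ ∈ (0,1) and h > 2/(1+δ). For the convex 1-smooth function f(x) = x²/2 on ℝ, starting point x0 = √2, and directions d_k = (1+δ)·f'(x_k) (which satisfy |d_k - f'(x_k)| ≤ δ|f'(x_k)|), the iterates x_{k+1} = x_k - h·d_k satisfy |f'(x_N)|² = 2·(h(1+δ) - 1)^{2N}, which tends to +∞ as N → ∞; in particular, for every M > 0 there exists N with |f'(x_N)| > M. -/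
/-- Divergence above the maximal stepsize: for `δ ∈ (0,1)` and
`h > 2/(1+δ)`, on the quadratic `f(x) = x²/2` with `x0 = √2` and directions
`d_k = (1+δ)·f'(x_k)` (which are `δ`-relatively inexact), the iterates
`x_{k+1} = x_k - h·d_k` satisfy `|f'(x_N)|² = 2(h(1+δ)-1)^{2N} → +∞`; in particular the
gradient norms exceed any bound `M > 0`. -/
theorem divergence_above_max_stepsize
    (δ h : ℝ) (hδ : δ ∈ Set.Ioo (0 : ℝ) 1) (hh : 2 / (1 + δ) < h)
    (f : ℝ → ℝ) (hf : f = fun x => x ^ 2 / 2)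
    (x d : ℕ → ℝ)
    (hx0 : x 0 = Real.sqrt 2)
    (hd : ∀ k, d k = (1 + δ) * deriv f (x k))
    (hstep : ∀ k, x (k + 1) = x k - h * d k) :
    (∀ k, |d k - deriv f (x k)| ≤ δ * |deriv f (x k)|) ∧
    (∀ N : ℕ, |deriv f (x N)| ^ 2 = 2 * (h * (1 + δ) - 1) ^ (2 * N)) ∧
    Filter.Tendsto (fun N : ℕ => |deriv f (x N)| ^ 2) Filter.atTop Filter.atTop ∧
    (∀ M : ℝ, 0 < M → ∃ N : ℕ, M < |deriv f (x N)|) := by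
  obtain ⟨hδ0, hδ1⟩ := hδ
  have h1δ : (0:ℝ) < 1 + δ := by linarith
  have hderiv : ∀ y : ℝ, deriv f y = y := by
    intro y
    rw [hf]
    have : deriv (fun x : ℝ => x ^ 2 / 2) y = deriv (fun x : ℝ => x ^ 2) y / 2 :=
      deriv_div_const _
    rw [this, deriv_pow_field]
    ring
  have hc : 1 < h * (1 + δ) - 1 := by
    have : 2 < h * (1 + δ) := by
      rw [div_lt_iff₀ h1δ] at hh
      linarith
    linarith
  set r : ℝ := 1 - h * (1 + δ) with hr
  have hxN : ∀ N : ℕ, x N = Real.sqrt 2 * r ^ N := by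
    intro N
    induction N with
    | zero => simpa using hx0
    | succ n ih =>
      rw [hstep n, hd n, hderiv, ih]
      ring
  have key : ∀ N : ℕ, |deriv f (x N)| ^ 2 = 2 * (h * (1 + δ) - 1) ^ (2 * N) := by
    intro N
    rw [hderiv, hxN N, sq_abs]
    have h2 : Real.sqrt 2 ^ 2 = 2 := Real.sq_sqrt (by norm_num)
    have hrneg : r = -(h * (1 + δ) - 1) := by rw [hr]; ring
    calc (Real.sqrt 2 * r ^ N) ^ 2 = Real.sqrt 2 ^ 2 * (r ^ N) ^ 2 := by ring
      _ = 2 * r ^ (2 * N) := by rw [h2, ← pow_mul, mul_comm N 2]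
      _ = 2 * (h * (1 + δ) - 1) ^ (2 * N) := by
          rw [hrneg, Even.neg_pow (even_two_mul N)]
  have htend : Filter.Tendsto (fun N : ℕ => |deriv f (x N)| ^ 2) Filter.atTop Filter.atTop := by
    have heq : (fun N : ℕ => |deriv f (x N)| ^ 2) =
        fun N : ℕ => 2 * ((h * (1 + δ) - 1) ^ 2) ^ N := by
      funext N
      rw [key N, pow_mul]
    rw [heq]
    have hc2 : 1 < (h * (1 + δ) - 1) ^ 2 := by nlinarith
    exact (tendsto_pow_atTop_atTop_of_one_lt hc2).const_mul_atTop (by norm_num)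
  refine ⟨?_, key, htend, ?_⟩
  · intro k
    rw [hd k]
    have : (1 + δ) * deriv f (x k) - deriv f (x k) = δ * deriv f (x k) := by ring
    rw [this, abs_mul, abs_of_pos hδ0]
  · intro M hM
    obtain ⟨N, hN⟩ := (htend.eventually_gt_atTop (M ^ 2)).exists
    exact ⟨N, lt_of_pow_lt_pow_left₀ 2 (abs_nonneg _) hN⟩
end
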